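/- arXiv:0705.4259 — 13 statements merged into one kernel-verified Lean document; each statement's English description precedes it below -/
import Mathlib

section
/- Let (X_k)_{k∈K} be a family of pairwise disjoint nonempty posets and let X be their disjoint union with the order given by the union of the orders. If each X_k is compact in its interval topology, then X is compact in its interval topology. -/
open Topology Filter


/-- The interval topology on a poset: generated by the subbase of complements of
principal down-sets `(x] = Set.Iic x` and principal up-sets `[x) = Set.Ici x`. -/
def intervalTopology (X : Type*) [Preorder X] : TopologicalSpace X :=
  TopologicalSpace.generateFrom
    ({S | ∃ x : X, S = (Set.Iic x)ᶜ} ∪ {S | ∃ x : X, S = (Set.Ici x)ᶜ})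

/-- If each member of a family of pairwise disjoint nonempty posets is compact in its
interval topology, then their disjoint union (with the union order) is compact in its
interval topology. -/
theorem disjUnion_intervalTopology_compact_of_forall_compact
    {K : Type*} (X : K → Type*) [∀ k, PartialOrder (X k)]
    (hne : ∀ k, Nonempty (X k))
    (hc : ∀ k, @CompactSpace (X k) (intervalTopology (X k))) :
    @CompactSpace (Σ k, X k) (intervalTopology (Σ k, X k)) := by
  letI tX : ∀ k, TopologicalSpace (X k) := fun k => intervalTopology (X k)
  letI tS : TopologicalSpace (Σ k, X k) := intervalTopology (Σ k, X k)
  -- continuity of the inclusions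
  have hcont : ∀ k, Continuous (Sigma.mk k : X k → Σ k, X k) := by
    intro k
    apply continuous_generateFrom_iff.mpr
    rintro S (⟨⟨j, y⟩, rfl⟩ | ⟨⟨j, y⟩, rfl⟩)
    · rcases eq_or_ne j k with rfl | hjk
      · have : Sigma.mk j ⁻¹' (Set.Iic (⟨j, y⟩ : Σ k, X k))ᶜ = (Set.Iic y)ᶜ := by
          ext z; simp [Sigma.mk_le_mk_iff]
        rw [this]
        exact TopologicalSpace.isOpen_generateFrom_of_mem (Or.inl ⟨y, rfl⟩)
      · have : Sigma.mk k ⁻¹' (Set.Iic (⟨j, y⟩ : Σ k, X k))ᶜ = Set.univ := by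
          ext z
          simp only [Set.mem_preimage, Set.mem_compl_iff, Set.mem_Iic, Set.mem_univ, iff_true]
          intro h
          exact hjk (show k = j by cases h; rfl).symm
        rw [this]; exact isOpen_univ
    · rcases eq_or_ne j k with rfl | hjk
      · have : Sigma.mk j ⁻¹' (Set.Ici (⟨j, y⟩ : Σ k, X k))ᶜ = (Set.Ici y)ᶜ := by
          ext z; simp [Sigma.mk_le_mk_iff]
        rw [this]
        exact TopologicalSpace.isOpen_generateFrom_of_mem (Or.inr ⟨y, rfl⟩)
      · have : Sigma.mk k ⁻¹' (Set.Ici (⟨j, y⟩ : Σ k, X k))ᶜ = Set.univ := by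
          ext z
          simp only [Set.mem_preimage, Set.mem_compl_iff, Set.mem_Ici, Set.mem_univ, iff_true]
          intro h
          exact hjk (by cases h; rfl)
        rw [this]; exact isOpen_univ
  refine ⟨isCompact_iff_ultrafilter_le_nhds.mpr fun f _ => ?_⟩
  by_cases hk : ∃ k, Sigma.fst ⁻¹' {k} ∈ f
  · -- the ultrafilter concentrates on the component `k`
    obtain ⟨k, hk⟩ := hk
    have hrange : Set.range (Sigma.mk k) ∈ f := by
      filter_upwards [hk] with z hz
      rcases z with ⟨j, x⟩
      obtain rfl : j = k := hz
      exact ⟨x, rfl⟩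
    set f' := f.comap sigma_mk_injective hrange with hf'
    obtain ⟨x, -, hx⟩ :=
      isCompact_iff_ultrafilter_le_nhds.mp (hc k).isCompact_univ f'
        (by simp [Filter.le_principal_iff])
    refine ⟨⟨k, x⟩, Set.mem_univ _, ?_⟩
    have hmap : Filter.map (Sigma.mk k) (Filter.comap (Sigma.mk k) (f : Filter (Σ k, X k)))
        = (f : Filter (Σ k, X k)) :=
      Filter.map_comap_of_mem (f := (f : Filter (Σ k, X k))) hrange
    calc (f : Filter (Σ k, X k))
        = Filter.map (Sigma.mk k) (Filter.comap (Sigma.mk k) (f : Filter _)) := hmap.symm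
      _ ≤ Filter.map (Sigma.mk k) (𝓝 x) := by
          refine Filter.map_mono ?_
          rw [← Ultrafilter.coe_comap f sigma_mk_injective hrange]
          exact hx
      _ ≤ 𝓝 (⟨k, x⟩ : Σ k, X k) := ((hcont k).tendsto x)
  · -- the ultrafilter is "spread out"; then any point is a limit
    push_neg at hk
    have hS : Nonempty (Σ k, X k) := by
      obtain ⟨z, -⟩ := Filter.nonempty_of_mem (Filter.univ_mem (f := (f : Filter (Σ k, X k))))
      exact ⟨z⟩
    obtain ⟨⟨k₀, -⟩⟩ := hS
    obtain ⟨x₀⟩ := hne k₀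
    refine ⟨⟨k₀, x₀⟩, Set.mem_univ _, ?_⟩
    have hnh : 𝓝 (⟨k₀, x₀⟩ : Σ k, X k) =
        ⨅ s ∈ {s | (⟨k₀, x₀⟩ : Σ k, X k) ∈ s ∧
          s ∈ ({S | ∃ x : Σ k, X k, S = (Set.Iic x)ᶜ} ∪
               {S | ∃ x : Σ k, X k, S = (Set.Ici x)ᶜ})}, 𝓟 s :=
      TopologicalSpace.nhds_generateFrom
    rw [hnh]
    refine le_iInf fun s => le_iInf fun hs => Filter.le_principal_iff.mpr ?_
    obtain ⟨-, hsub⟩ := hs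
    have key : ∀ j : K, Sigma.fst ⁻¹' ({j}ᶜ : Set K) ∈ f := by
      intro j
      have := (Ultrafilter.compl_mem_iff_notMem (s := Sigma.fst ⁻¹' {j})).mpr (hk j)
      simpa [Set.preimage_compl] using this
    rcases hsub with ⟨⟨j, y⟩, rfl⟩ | ⟨⟨j, y⟩, rfl⟩
    · filter_upwards [key j] with z hz h
      exact hz (by cases h; rfl)
    · filter_upwards [key j] with z hz h
      exact hz (by cases h; rfl)
end

section
/- A poset that is the disjoint union of pairwise disjoint nonempty posets is compact in its interval topology if and only if each component poset is compact in its interval topology. -/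
/-!
In the interval topology an ultrafilter `F` converges to `a` iff `a ≤ x` whenever `(x] ∈ F` and
`x ≤ a` whenever `[x) ∈ F`. In the disjoint union every principal interval lies in a single
component. Hence an ultrafilter on the union that contains a component converges exactly where its
restriction to that component does, while one containing no component contains no principal
interval and converges to every point. Conversely, an ultrafilter on `X k` whose image converges
to a point of another component contains no principal interval either, so it converges to every
point of `X k`.
-/

open Set Filter

theorem Ultrafilter.le_nhds_intervalTopology_iff {X : Type*} [Preorder X] {F : Ultrafilter X}
    {a : X} :
    ↑F ≤ @nhds X (intervalTopology X) a ↔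
      (∀ x, Iic x ∈ F → a ≤ x) ∧ (∀ x, Ici x ∈ F → x ≤ a) := by
  rw [← tendsto_id', intervalTopology, TopologicalSpace.tendsto_nhds_generateFrom_iff]
  simp only [mem_union, mem_ofPred_eq, or_imp, forall_and, forall_exists_index,
    forall_eq_apply_imp_iff, preimage_id_eq, id_eq, mem_compl_iff, Ultrafilter.mem_coe,
    Ultrafilter.compl_mem_iff_notMem, mem_Iic, mem_Ici, not_imp_not]

theorem compactSpace_intervalTopology_iff {X : Type*} [Preorder X] :
    @CompactSpace X (intervalTopology X) ↔
      ∀ F : Ultrafilter X, ∃ a, (∀ x, Iic x ∈ F → a ≤ x) ∧ (∀ x, Ici x ∈ F → x ≤ a) := by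
  let := intervalTopology X
  simp only [← isCompact_univ_iff, isCompact_iff_ultrafilter_le_nhds, le_principal_iff, univ_mem,
    mem_univ, true_and, forall_const, Ultrafilter.le_nhds_intervalTopology_iff]

namespace Sigma

variable {K : Type*} {X : K → Type*} [∀ k, Preorder (X k)]

theorem image_mk_Iic (k : K) (x : X k) : Sigma.mk k '' Iic x = Iic ⟨k, x⟩ := by
  ext ⟨j, y⟩
  constructor
  · rintro ⟨z, hz, hzy⟩
    cases hzy
    exact mk_le_mk_iff.2 hz
  · intro h
    obtain rfl : j = k := (le_def.1 h).1
    exact ⟨y, (mk_le_mk_iff (α := X)).1 h, rfl⟩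

theorem image_mk_Ici (k : K) (x : X k) : Sigma.mk k '' Ici x = Ici ⟨k, x⟩ := by
  ext ⟨j, y⟩
  constructor
  · rintro ⟨z, hz, hzy⟩
    cases hzy
    exact mk_le_mk_iff.2 hz
  · intro h
    obtain rfl : j = k := (le_def.1 h).1.symm
    exact ⟨y, (mk_le_mk_iff (α := X)).1 h, rfl⟩

end Sigma

theorem Ultrafilter.eq_of_range_sigmaMk_mem {K : Type*} {X : K → Type*}
    {F : Ultrafilter (Σ k, X k)} {j k : K} (hj : range (Sigma.mk j) ∈ F)
    (hk : range (Sigma.mk k) ∈ F) : j = k := by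
  obtain ⟨_, ⟨x, rfl⟩, ⟨y, hy⟩⟩ := F.nonempty_of_mem (inter_mem hj hk)
  exact (congrArg Sigma.fst hy).symm

theorem compactSpace_intervalTopology_of_sigma {K : Type*} {X : K → Type*} [∀ k, Preorder (X k)]
    (h : @CompactSpace (Σ k, X k) (intervalTopology (Σ k, X k))) (k : K) [Nonempty (X k)] :
    @CompactSpace (X k) (intervalTopology (X k)) := by
  rw [compactSpace_intervalTopology_iff] at h ⊢
  intro G
  have hmem {s : Set (X k)} : Sigma.mk k '' s ∈ G.map (Sigma.mk k) ↔ s ∈ G := by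
    rw [Ultrafilter.mem_map, preimage_image_eq _ sigma_mk_injective]
  obtain ⟨⟨j, b⟩, hlow, hup⟩ := h (G.map (Sigma.mk k))
  by_cases hjk : j = k
  · subst hjk
    refine ⟨b, fun x hx => ?_, fun x hx => ?_⟩
    · exact Sigma.mk_le_mk_iff.1 (hlow ⟨j, x⟩ (Sigma.image_mk_Iic j x ▸ hmem.2 hx))
    · exact Sigma.mk_le_mk_iff.1 (hup ⟨j, x⟩ (Sigma.image_mk_Ici j x ▸ hmem.2 hx))
  · refine ⟨Classical.arbitrary _, fun x hx => absurd ?_ hjk, fun x hx => absurd ?_ hjk⟩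
    · exact (Sigma.le_def.1 (hlow ⟨k, x⟩ (Sigma.image_mk_Iic k x ▸ hmem.2 hx))).1
    · exact (Sigma.le_def.1 (hup ⟨k, x⟩ (Sigma.image_mk_Ici k x ▸ hmem.2 hx))).1.symm

theorem compactSpace_intervalTopology_sigma {K : Type*} {X : K → Type*} [∀ k, Preorder (X k)]
    (h : ∀ k, @CompactSpace (X k) (intervalTopology (X k))) :
    @CompactSpace (Σ k, X k) (intervalTopology (Σ k, X k)) := by
  rw [compactSpace_intervalTopology_iff]
  intro F
  by_cases hconc : ∃ k, range (Sigma.mk k) ∈ F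
  · obtain ⟨k, hk⟩ := hconc
    obtain ⟨a, hlow, hup⟩ :=
      compactSpace_intervalTopology_iff.1 (h k) (F.comap sigma_mk_injective hk)
    refine ⟨⟨k, a⟩, fun ⟨j, b⟩ hb => ?_, fun ⟨j, b⟩ hb => ?_⟩
    · rw [← Sigma.image_mk_Iic] at hb
      obtain rfl := F.eq_of_range_sigmaMk_mem (mem_of_superset hb (image_subset_range _ _)) hk
      exact Sigma.mk_le_mk_iff.2 (hlow b ((Ultrafilter.mem_comap _ _ _).2 hb))
    · rw [← Sigma.image_mk_Ici] at hb
      obtain rfl := F.eq_of_range_sigmaMk_mem (mem_of_superset hb (image_subset_range _ _)) hk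
      exact Sigma.mk_le_mk_iff.2 (hup b ((Ultrafilter.mem_comap _ _ _).2 hb))
  · push Not at hconc
    obtain ⟨p, -⟩ := F.nonempty_of_mem univ_mem
    refine ⟨p, fun ⟨j, b⟩ hb => absurd ?_ (hconc j), fun ⟨j, b⟩ hb => absurd ?_ (hconc j)⟩
    · exact mem_of_superset hb (Sigma.image_mk_Iic j b ▸ image_subset_range _ _)
    · exact mem_of_superset hb (Sigma.image_mk_Ici j b ▸ image_subset_range _ _)

/-- The disjoint union (with the union order) of a family of pairwise disjoint nonempty
posets is compact in its interval topology iff each member poset is compact in its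
interval topology. -/
theorem disjUnion_intervalTopology_compact_iff
    {K : Type*} (X : K → Type*) [∀ k, PartialOrder (X k)]
    (hne : ∀ k, Nonempty (X k)) :
    @CompactSpace (Σ k, X k) (intervalTopology (Σ k, X k)) ↔
      ∀ k, @CompactSpace (X k) (intervalTopology (X k)) :=
  ⟨fun h k => have := hne k; compactSpace_intervalTopology_of_sigma h k,
    compactSpace_intervalTopology_sigma⟩
end

section
/- If a poset X admits a topology τ making (X; τ, ≤) a Priestley space, then every order component of X is compact with respect to its interval topology. -/
/-- A Priestley space: a poset with a compact topology which is totally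
order-disconnected, i.e. whenever `x ≱ y` there is a clopen down-set containing `x`
but not `y`. -/
def IsPriestley (X : Type*) [TopologicalSpace X] [Preorder X] : Prop :=
  CompactSpace X ∧
    ∀ x y : X, ¬ y ≤ x → ∃ U : Set X, IsClopen U ∧ IsLowerSet U ∧ x ∈ U ∧ y ∉ U

theorem le_nhds_intervalTopology {Y : Type*} [Preorder Y] (F : Ultrafilter Y) {q : Y}
    (hIic : ∀ a, Set.Iic a ∈ F → q ≤ a) (hIci : ∀ a, Set.Ici a ∈ F → a ≤ q) :
    (F : Filter Y) ≤ @nhds Y (intervalTopology Y) q := by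
  rw [intervalTopology, TopologicalSpace.nhds_generateFrom]
  refine le_iInf₂ fun s ⟨hqs, hs⟩ => Filter.le_principal_iff.2 ?_
  rcases hs with ⟨a, rfl⟩ | ⟨a, rfl⟩
  · exact F.compl_mem_iff_notMem.2 fun ha => hqs (hIic a ha)
  · exact F.compl_mem_iff_notMem.2 fun ha => hqs (hIci a ha)

namespace IsPriestley

variable {X : Type*} [Preorder X] [TopologicalSpace X]

theorem isClosed_Iic (hp : IsPriestley X) (a : X) : IsClosed (Set.Iic a) := by
  refine isOpen_compl_iff.1 (isOpen_iff_forall_mem_open.2 fun y hy => ?_)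
  obtain ⟨U, hU, hUl, haU, hyU⟩ := hp.2 a y hy
  exact ⟨Uᶜ, fun z hzU hza => hzU (hUl hza haU), hU.isClosed.isOpen_compl, hyU⟩

theorem isClosed_Ici (hp : IsPriestley X) (a : X) : IsClosed (Set.Ici a) := by
  refine isOpen_compl_iff.1 (isOpen_iff_forall_mem_open.2 fun y hy => ?_)
  obtain ⟨U, hU, hUl, hyU, haU⟩ := hp.2 y a hy
  exact ⟨U, fun z hzU hza => haU (hUl hza hzU), hU.isOpen, hyU⟩

/-- The interval topology of the subtype is its own, in general not the subspace topology. -/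
theorem compactSpace_intervalTopology_subtype (hp : IsPriestley X) {P : X → Prop}
    (hP : ∀ a b, P a → a ≤ b ∨ b ≤ a → P b) :
    @CompactSpace {y // P y} (intervalTopology _) := by
  let := intervalTopology {y // P y}
  refine ⟨isCompact_iff_ultrafilter_le_nhds.2 fun F _ => ?_⟩
  have := hp.1
  obtain ⟨p, -, hFp⟩ := isCompact_univ.ultrafilter_le_nhds (F.map Subtype.val) (by simp)
  have hlim : Filter.Tendsto Subtype.val (F : Filter {y // P y}) (nhds p) := hFp
  have hle (a : {y // P y}) (ha : Set.Iic a ∈ F) : p ≤ a :=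
    (hp.isClosed_Iic a).mem_of_tendsto hlim ha
  have hge (a : {y // P y}) (ha : Set.Ici a ∈ F) : (a : X) ≤ p :=
    (hp.isClosed_Ici a).mem_of_tendsto hlim ha
  by_cases hPp : P p
  · exact ⟨⟨p, hPp⟩, trivial, le_nhds_intervalTopology F hle hge⟩
  · obtain ⟨q⟩ := (F : Filter {y // P y}).nonempty_of_neBot
    refine ⟨q, trivial, le_nhds_intervalTopology F (fun a ha => ?_) fun a ha => ?_⟩
    · exact absurd (hP a p a.2 (.inr (hle a ha))) hPp
    · exact absurd (hP a p a.2 (.inl (hge a ha))) hPp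

end IsPriestley

/-- If a poset admits a Priestley topology, then every order component (equivalence
class of the transitive closure of comparability) is compact in its interval topology. -/
theorem orderComponent_compact_of_representable {X : Type*} [PartialOrder X]
    (h : ∃ τ : TopologicalSpace X, @IsPriestley X τ _) (x : X) :
    @CompactSpace {y : X // Relation.ReflTransGen (fun a b : X => a ≤ b ∨ b ≤ a) x y}
      (intervalTopology _) := by
  obtain ⟨τ, hp⟩ := h
  exact hp.compactSpace_intervalTopology_subtype fun a b ha hab => ha.tail hab
end

section
/- Let (X_k; ≤_k)_{k∈K} be a family of pairwise disjoint nonempty posets, each of which admits a Priestley space topology. Then the disjoint union X = ⋃_k X_k with order ≤ = ⋃_k ≤_k also admits a topology τ making (X; τ, ≤) a Priestley space. -/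
/-- If each member of a family of pairwise disjoint nonempty posets is representable
(admits a Priestley topology), then so is their disjoint union with the union order. -/
theorem disjUnion_representable
    {K : Type*} (X : K → Type*) [∀ k, PartialOrder (X k)]
    (hne : ∀ k, Nonempty (X k))
    (h : ∀ k, ∃ τ : TopologicalSpace (X k), @IsPriestley (X k) τ _) :
    ∃ τ : TopologicalSpace (Σ k, X k), @IsPriestley (Σ k, X k) τ _ := by
  classical
  rcases isEmpty_or_nonempty (Σ k, X k) with hE | hNE
  · letI : TopologicalSpace (Σ k, X k) := ⊥
    exact ⟨‹_›, Finite.compactSpace, fun x => hE.elim x⟩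
  -- choose topologies and a base point
  choose τ hP using h
  letI : ∀ k, TopologicalSpace (X k) := τ
  haveI : ∀ k, CompactSpace (X k) := fun k => (hP k).1
  obtain ⟨x₀⟩ := hNE
  -- basic facts about preimages of fibers
  have fib_self : ∀ (i : K) (V : Set (X i)), Sigma.mk i ⁻¹' (Sigma.mk i '' V) = V :=
    fun i V => Set.preimage_image_eq V sigma_mk_injective
  have fib_ne : ∀ {k i : K}, k ≠ i → ∀ (V : Set (X i)),
      Sigma.mk k ⁻¹' (Sigma.mk i '' V) = ∅ := by
    intro k i hki V
    ext c
    simp only [Set.mem_preimage, Set.mem_image, Set.mem_empty_iff_false, iff_false]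
    rintro ⟨v, _, hv⟩
    exact hki (congrArg Sigma.fst hv).symm
  have le_fst : ∀ {a b : Σ k, X k}, a ≤ b → a.1 = b.1 := by
    intro a b hab
    exact (Sigma.le_def.mp hab).1
  -- the topology: disjoint union, compactified at `x₀`
  letI T : TopologicalSpace (Σ k, X k) :=
    { IsOpen := fun U => (∀ k, IsOpen (Sigma.mk k ⁻¹' U)) ∧
        (x₀ ∈ U → {k | Sigma.mk k ⁻¹' U ≠ Set.univ}.Finite),
      isOpen_univ := ⟨fun _ => isOpen_univ, fun _ => by simp⟩,
      isOpen_inter := by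
        rintro U V ⟨hU1, hU2⟩ ⟨hV1, hV2⟩
        refine ⟨fun k => (hU1 k).inter (hV1 k), fun hx => ?_⟩
        refine ((hU2 hx.1).union (hV2 hx.2)).subset ?_
        intro k hk
        by_contra hc
        simp only [Set.mem_union, Set.mem_setOf_eq, not_or, not_not] at hc
        apply hk
        rw [Set.preimage_inter, hc.1, hc.2, Set.univ_inter]
      isOpen_sUnion := by
        intro S hS
        constructor
        · intro k
          rw [Set.preimage_sUnion]
          exact isOpen_biUnion fun U hU => (hS U hU).1 k
        · intro hx
          obtain ⟨U, hUS, hxU⟩ := hx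
          refine ((hS U hUS).2 hxU).subset ?_
          intro k hk hc
          apply hk
          rw [Set.eq_univ_iff_forall]
          intro c
          rw [Set.eq_univ_iff_forall] at hc
          exact Set.mem_preimage.mpr ⟨U, hUS, hc c⟩ }
  have isOpen_iff : ∀ U : Set (Σ k, X k),
      IsOpen U ↔ (∀ k, IsOpen (Sigma.mk k ⁻¹' U)) ∧
        (x₀ ∈ U → {k | Sigma.mk k ⁻¹' U ≠ Set.univ}.Finite) := fun _ => Iff.rfl
  have cont : ∀ k, Continuous (Sigma.mk k : X k → Σ k, X k) := by
    intro k
    rw [continuous_def]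
    exact fun U hU => ((isOpen_iff U).mp hU).1 k
  have hrange : ∀ k, IsCompact (Set.range (Sigma.mk k : X k → Σ k, X k)) :=
    fun k => isCompact_range (cont k)
  refine ⟨T, ?_, ?_⟩
  -- compactness
  · constructor
    apply isCompact_of_finite_subcover
    intro ι Uf hUo hcov
    obtain ⟨i₀, hi₀⟩ := Set.mem_iUnion.mp (hcov (Set.mem_univ x₀))
    have hF := ((isOpen_iff (Uf i₀)).mp (hUo i₀)).2 hi₀
    have hsub : ∀ k, Set.range (Sigma.mk k : X k → Σ k, X k) ⊆ ⋃ i, Uf i :=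
      fun k p _ => hcov (Set.mem_univ p)
    choose t ht using fun k => (hrange k).elim_finite_subcover Uf hUo (hsub k)
    refine ⟨insert i₀ (hF.toFinset.biUnion t), ?_⟩
    rintro ⟨k, c⟩ -
    by_cases hk : Sigma.mk k ⁻¹' Uf i₀ = Set.univ
    · refine Set.mem_biUnion (Finset.mem_insert_self _ _) ?_
      have : c ∈ Sigma.mk k ⁻¹' Uf i₀ := by rw [hk]; trivial
      exact this
    · have hmem : (⟨k, c⟩ : Σ k, X k) ∈ ⋃ i ∈ t k, Uf i := ht k ⟨c, rfl⟩
      obtain ⟨i, hi, hpi⟩ := Set.mem_iUnion₂.mp hmem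
      refine Set.mem_biUnion ?_ hpi
      exact Finset.mem_insert_of_mem (Finset.mem_biUnion.mpr ⟨k, hF.mem_toFinset.mpr hk, hi⟩)
  -- total order-disconnectedness
  · rintro ⟨i, a⟩ ⟨j, b⟩ hxy
    by_cases hij : i = j
    · subst hij
      have hba : ¬ b ≤ a := fun hb => hxy (Sigma.mk_le_mk_iff.mpr hb)
      obtain ⟨V, hVc, hVl, haV, hbV⟩ := (hP i).2 a b hba
      by_cases hx0 : x₀ ∈ Sigma.mk i '' V
      · -- U = image of V together with all other components
        refine ⟨Sigma.mk i '' V ∪ {p | p.1 ≠ i}, ⟨?_, ?_⟩, ?_, Or.inl ⟨a, haV, rfl⟩, ?_⟩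
        · -- closed : complement is open
          rw [← isOpen_compl_iff, isOpen_iff]
          constructor
          · intro k
            rw [Set.preimage_compl, Set.preimage_union]
            by_cases hk : k = i
            · subst hk
              have : Sigma.mk k ⁻¹' {p : Σ k, X k | p.1 ≠ k} = ∅ := by
                ext c; simp
              rw [fib_self, this, Set.union_empty]
              exact hVc.1.isOpen_compl
            · have : Sigma.mk k ⁻¹' {p : Σ k, X k | p.1 ≠ i} = Set.univ := by
                ext c; simp [hk]
              rw [fib_ne hk, this, Set.empty_union, Set.compl_univ]
              exact isOpen_empty
          · intro hx
            exact absurd (Or.inl hx0) hx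
        · -- open
          rw [isOpen_iff]
          constructor
          · intro k
            rw [Set.preimage_union]
            by_cases hk : k = i
            · subst hk
              have : Sigma.mk k ⁻¹' {p : Σ k, X k | p.1 ≠ k} = ∅ := by
                ext c; simp
              rw [fib_self, this, Set.union_empty]
              exact hVc.2
            · have : Sigma.mk k ⁻¹' {p : Σ k, X k | p.1 ≠ i} = Set.univ := by
                ext c; simp [hk]
              rw [this, Set.union_univ]
              exact isOpen_univ
          · intro _
            refine (Set.finite_singleton i).subset ?_
            intro k hk
            by_contra hki
            rw [Set.mem_singleton_iff] at hki
            apply hk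
            have : Sigma.mk k ⁻¹' {p : Σ k, X k | p.1 ≠ i} = Set.univ := by
              ext c; simp [hki]
            rw [Set.preimage_union, this, Set.union_univ]
        · -- lower set
          rintro p q hle hp
          rcases hp with ⟨v, hv, rfl⟩ | hp
          · obtain ⟨qk, qa⟩ := q
            have hfst : qk = i := le_fst hle
            subst hfst
            exact Or.inl ⟨qa, hVl (Sigma.mk_le_mk_iff.mp hle) hv, rfl⟩
          · refine Or.inr fun hq => hp ?_
            rw [← le_fst hle]
            exact hq
        · -- y ∉ U
          rintro (⟨v, hv, heq⟩ | hp)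
          · exact hbV ((sigma_mk_injective heq) ▸ hv)
          · exact hp rfl
      · -- U = image of V
        refine ⟨Sigma.mk i '' V, ⟨?_, ?_⟩, ?_, ⟨a, haV, rfl⟩, ?_⟩
        · rw [← isOpen_compl_iff, isOpen_iff]
          constructor
          · intro k
            rw [Set.preimage_compl]
            by_cases hk : k = i
            · subst hk; rw [fib_self]; exact hVc.1.isOpen_compl
            · rw [fib_ne hk, Set.compl_empty]; exact isOpen_univ
          · intro _
            refine (Set.finite_singleton i).subset ?_
            intro k hk
            by_contra hki
            rw [Set.mem_singleton_iff] at hki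
            apply hk
            rw [Set.preimage_compl, fib_ne hki, Set.compl_empty]
        · rw [isOpen_iff]
          refine ⟨fun k => ?_, fun hx => absurd hx hx0⟩
          by_cases hk : k = i
          · subst hk; rw [fib_self]; exact hVc.2
          · rw [fib_ne hk]; exact isOpen_empty
        · rintro p q hle ⟨v, hv, rfl⟩
          obtain ⟨qk, qa⟩ := q
          have hfst : qk = i := le_fst hle
          subst hfst
          exact ⟨qa, hVl (Sigma.mk_le_mk_iff.mp hle) hv, rfl⟩
        · rintro ⟨v, hv, heq⟩
          exact hbV ((sigma_mk_injective heq) ▸ hv)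
    · -- different components
      by_cases h0 : x₀.1 = j
      · -- U = component of i
        refine ⟨{p | p.1 = i}, ⟨?_, ?_⟩, ?_, rfl, fun hh => hij hh.symm⟩
        · rw [← isOpen_compl_iff, isOpen_iff]
          constructor
          · intro k
            by_cases hk : k = i
            · have : Sigma.mk k ⁻¹' {p : Σ k, X k | p.1 = i}ᶜ = ∅ := by
                ext c; simp [hk]
              rw [this]; exact isOpen_empty
            · have : Sigma.mk k ⁻¹' {p : Σ k, X k | p.1 = i}ᶜ = Set.univ := by
                ext c; simp [hk]
              rw [this]; exact isOpen_univ
          · intro _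
            refine (Set.finite_singleton i).subset ?_
            intro k hk
            by_contra hki
            rw [Set.mem_singleton_iff] at hki
            apply hk
            ext c; simp [hki]
        · rw [isOpen_iff]
          constructor
          · intro k
            by_cases hk : k = i
            · have : Sigma.mk k ⁻¹' {p : Σ k, X k | p.1 = i} = Set.univ := by
                ext c; simp [hk]
              rw [this]; exact isOpen_univ
            · have : Sigma.mk k ⁻¹' {p : Σ k, X k | p.1 = i} = ∅ := by
                ext c; simp [hk]
              rw [this]; exact isOpen_empty
          · intro hx
            exact absurd ((show x₀.1 = i from hx).symm.trans h0) hij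
        · intro p q hle hp
          exact (le_fst hle).trans hp
      · -- U = complement of component of j
        refine ⟨{p | p.1 ≠ j}, ⟨?_, ?_⟩, ?_, hij, fun hh => hh rfl⟩
        · rw [← isOpen_compl_iff, isOpen_iff]
          constructor
          · intro k
            by_cases hk : k = j
            · have : Sigma.mk k ⁻¹' {p : Σ k, X k | p.1 ≠ j}ᶜ = Set.univ := by
                ext c; simp [hk]
              rw [this]; exact isOpen_univ
            · have : Sigma.mk k ⁻¹' {p : Σ k, X k | p.1 ≠ j}ᶜ = ∅ := by
                ext c; simp [hk]
              rw [this]; exact isOpen_empty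
          · intro hx
            exact absurd (by simpa using hx : x₀.1 = j) h0
        · rw [isOpen_iff]
          constructor
          · intro k
            by_cases hk : k = j
            · have : Sigma.mk k ⁻¹' {p : Σ k, X k | p.1 ≠ j} = ∅ := by
                ext c; simp [hk]
              rw [this]; exact isOpen_empty
            · have : Sigma.mk k ⁻¹' {p : Σ k, X k | p.1 ≠ j} = Set.univ := by
                ext c; simp [hk]
              rw [this]; exact isOpen_univ
          · intro _
            refine (Set.finite_singleton j).subset ?_
            intro k hk
            by_contra hkj
            rw [Set.mem_singleton_iff] at hkj
            apply hk
            ext c; simp [hkj]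
        · intro p q hle hp
          rw [Set.mem_setOf_eq, le_fst hle]
          exact hp
end

section
/- In the poset P defined by finite sequences of naturals with the alternating order, for every element p_{i₀,…,iₙ}, the principal up-set [p_{i₀,…,iₙ}) is a finite chain if n is even, and the principal down-set (p_{i₀,…,iₙ}] is a finite chain if n is odd. -/
/-- The generating relations of the alternating tree poset `P`.
Elements of `P` are coded by lists of naturals: `[]` is the root `p`, and
`[i₀, …, iₙ]` is `p_{i₀,…,iₙ}` (an element at level `n`).
The rules are exactly the displayed inequalities of the paper:
* `p < p_i`, and `p_i < p_j` for `j < i`;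
* for an even level parent `p_{i₀,…,i_{2r}}` (prefix `t` of even length, last entry `m`):
  `p_{i₀,…,i_{2r},i} < p_{i₀,…,i_{2r},j}` for `i < j`, and
  `p_{i₀,…,i_{2r},j} < p_{i₀,…,i_{2r-1},k}` for `k ≤ m`;
* for an odd level parent `p_{i₀,…,i_{2r+1}}` (prefix `t` of odd length, last entry `m`):
  `p_{i₀,…,i_{2r},k} < p_{i₀,…,i_{2r+1},i}` for `k ≤ m`, and
  `p_{i₀,…,i_{2r+1},i} < p_{i₀,…,i_{2r+1},j}` for `j < i`. -/
inductive TreeStep : List ℕ → List ℕ → Prop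
  | root_lt (i : ℕ) : TreeStep [] [i]
  | root_sib {i j : ℕ} : j < i → TreeStep [i] [j]
  | even_sib (t : List ℕ) (ht : Even t.length) (m i j : ℕ) :
      i < j → TreeStep (t ++ [m, i]) (t ++ [m, j])
  | even_up (t : List ℕ) (ht : Even t.length) (m k j : ℕ) :
      k ≤ m → TreeStep (t ++ [m, j]) (t ++ [k])
  | odd_down (t : List ℕ) (ht : Odd t.length) (m k i : ℕ) :
      k ≤ m → TreeStep (t ++ [k]) (t ++ [m, i])
  | odd_sib (t : List ℕ) (ht : Odd t.length) (m i j : ℕ) :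
      j < i → TreeStep (t ++ [m, i]) (t ++ [m, j])

/-- The order `≤` of the alternating tree poset `P`: the reflexive transitive closure
of the generating relations. -/
def TreeLe : List ℕ → List ℕ → Prop := Relation.ReflTransGen TreeStep
lemma step_src_odd {x y : List ℕ} (h : TreeStep x y) (hx : Odd x.length) :
    ∃ u i j, Even u.length ∧ x = u ++ [i] ∧ y = u ++ [j] ∧ j < i := by
  cases h with
  | root_lt i => simp [Nat.odd_iff] at hx
  | root_sib h => exact ⟨[], _, _, by simp, rfl, rfl, h⟩
  | even_sib t ht m i j hij =>
      rw [Nat.odd_iff] at hx; rw [Nat.even_iff] at ht; simp at hx; omega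
  | even_up t ht m k j hk =>
      rw [Nat.odd_iff] at hx; rw [Nat.even_iff] at ht; simp at hx; omega
  | odd_down t ht m k i hk =>
      rw [Nat.odd_iff] at hx; rw [Nat.odd_iff] at ht; simp at hx; omega
  | odd_sib t ht m i j hij =>
      refine ⟨t ++ [m], i, j, by simp [Nat.even_iff]; rw [Nat.odd_iff] at ht; omega,
        by simp, by simp, hij⟩

lemma step_tgt_even {x y : List ℕ} (h : TreeStep x y) (hy : Even y.length) :
    ∃ t m i j, Even t.length ∧ x = t ++ [m, i] ∧ y = t ++ [m, j] ∧ i < j := by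
  cases h with
  | root_lt i => simp [Nat.even_iff] at hy
  | root_sib h => simp [Nat.even_iff] at hy
  | even_sib t ht m i j hij => exact ⟨t, m, i, j, ht, rfl, rfl, hij⟩
  | even_up t ht m k j hk =>
      rw [Nat.even_iff] at hy ht; simp at hy; omega
  | odd_down t ht m k i hk =>
      rw [Nat.even_iff] at hy; rw [Nat.odd_iff] at ht; simp at hy; omega
  | odd_sib t ht m i j hij =>
      rw [Nat.even_iff] at hy; rw [Nat.odd_iff] at ht; simp at hy; omega

lemma le_dec {u : List ℕ} (hu : Even u.length) {i j : ℕ} (hj : j ≤ i) :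
    TreeLe (u ++ [i]) (u ++ [j]) := by
  rcases eq_or_lt_of_le hj with rfl | h
  · exact Relation.ReflTransGen.refl
  · apply Relation.ReflTransGen.single
    rcases u.eq_nil_or_concat with rfl | ⟨t, m, rfl⟩
    · exact TreeStep.root_sib h
    · have ht : Odd t.length := by
        simp [Nat.even_iff] at hu; rw [Nat.odd_iff]; omega
      simpa using TreeStep.odd_sib t ht m i j h

lemma le_inc {t : List ℕ} (ht : Even t.length) {m i j : ℕ} (hij : i ≤ j) :
    TreeLe (t ++ [m, i]) (t ++ [m, j]) := by
  rcases eq_or_lt_of_le hij with rfl | h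
  · exact Relation.ReflTransGen.refl
  · exact Relation.ReflTransGen.single (TreeStep.even_sib t ht m i j h)

lemma up_char {u : List ℕ} (hu : Even u.length) {i : ℕ} {y : List ℕ}
    (h : TreeLe (u ++ [i]) y) : ∃ j ≤ i, y = u ++ [j] := by
  induction h with
  | refl => exact ⟨i, le_refl _, rfl⟩
  | tail hab hbc ih =>
      obtain ⟨j, hj, rfl⟩ := ih
      have hodd : Odd (u ++ [j]).length := by simpa using hu.add_one
      obtain ⟨u', i', j', hu', hx, hy, hlt⟩ := step_src_odd hbc hodd
      obtain ⟨rfl, hi⟩ := List.append_inj' hx.symm rfl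
      simp at hi; subst hi
      exact ⟨j', le_trans (le_of_lt hlt) hj, hy⟩

lemma down_char {t : List ℕ} (ht : Even t.length) {m j : ℕ} {x : List ℕ}
    (h : TreeLe x (t ++ [m, j])) : ∃ i ≤ j, x = t ++ [m, i] := by
  induction h using Relation.ReflTransGen.head_induction_on with
  | refl => exact ⟨j, le_refl _, rfl⟩
  | head hac hcb ih =>
      obtain ⟨i, hi, rfl⟩ := ih
      have hev : Even (t ++ [m, i]).length := by
        rw [Nat.even_iff] at ht ⊢; simp; omega
      obtain ⟨t', m', i', j', ht', hx, hy, hlt⟩ := step_tgt_even hac hev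
      obtain ⟨rfl, h2⟩ := List.append_inj' hy.symm rfl
      simp at h2; obtain ⟨rfl, rfl⟩ := h2
      exact ⟨i', le_trans (le_of_lt hlt) hi, hx⟩

/-- For `p_{i₀,…,iₙ}` (coded by a nonempty list `s`, so `n = s.length - 1`):
if `n` is even (i.e. `s.length` is odd) then the principal up-set is a finite chain,
and if `n` is odd (i.e. `s.length` is even) then the principal down-set is a finite
chain. -/
theorem tree_principal_sets_finite_chain (s : List ℕ) (hs : s ≠ []) :
    (Odd s.length →
      {y : List ℕ | TreeLe s y}.Finite ∧
        ∀ y ∈ {y : List ℕ | TreeLe s y}, ∀ z ∈ {y : List ℕ | TreeLe s y},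
          TreeLe y z ∨ TreeLe z y) ∧
    (Even s.length →
      {y : List ℕ | TreeLe y s}.Finite ∧
        ∀ y ∈ {y : List ℕ | TreeLe y s}, ∀ z ∈ {y : List ℕ | TreeLe y s},
          TreeLe y z ∨ TreeLe z y) := by
  obtain ⟨u, i, rfl⟩ : ∃ u i, s = u ++ [i] := by
    rcases s.eq_nil_or_concat with rfl | ⟨u, i, rfl⟩
    · exact absurd rfl hs
    · exact ⟨u, i, by simp⟩
  constructor
  · intro hodd
    have hu : Even u.length := by
      rw [Nat.odd_iff] at hodd; simp at hodd; rw [Nat.even_iff]; omega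
    constructor
    · apply Set.Finite.subset ((Set.finite_Iic i).image fun j => u ++ [j])
      intro y hy
      obtain ⟨j, hj, rfl⟩ := up_char hu hy
      exact ⟨j, hj, rfl⟩
    · intro y hy z hz
      obtain ⟨j, hj, rfl⟩ := up_char hu hy
      obtain ⟨k, hk, rfl⟩ := up_char hu hz
      rcases le_total j k with h | h
      · exact Or.inr (le_dec hu h)
      · exact Or.inl (le_dec hu h)
  · intro heven
    obtain ⟨t, m, rfl⟩ : ∃ t m, u = t ++ [m] := by
      rcases u.eq_nil_or_concat with rfl | ⟨t, m, rfl⟩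
      · rw [Nat.even_iff] at heven; simp at heven
      · exact ⟨t, m, by simp⟩
    have ht : Even t.length := by rw [Nat.even_iff] at heven ⊢; simp at heven; omega
    have hre : t ++ [m] ++ [i] = t ++ [m, i] := by simp
    rw [hre]
    constructor
    · apply Set.Finite.subset ((Set.finite_Iic i).image fun k => t ++ [m, k])
      intro x hx
      obtain ⟨k, hk, rfl⟩ := down_char ht hx
      exact ⟨k, hk, rfl⟩
    · intro y hy z hz
      obtain ⟨k, hk, rfl⟩ := down_char ht hy
      obtain ⟨l, hl, rfl⟩ := down_char ht hz
      rcases le_total k l with h | h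
      · exact Or.inl (le_inc ht h)
      · exact Or.inr (le_inc ht h)
end

section
/- Let C be the set of all down-sets (decreasing subsets) of the rationals in (0,1), ordered by inclusion. Then C with its interval topology is a compact totally disconnected space. -/
/-- The rationals in the open interval `(0,1)`. -/
abbrev QuOpenUnit : Type := {q : ℚ // 0 < q ∧ q < 1}

/-- `C`: the set of all down-sets of `ℚ ∩ (0,1)`, ordered by inclusion. -/
abbrev DownSetsQ : Type := {I : Set QuOpenUnit // IsLowerSet I}

open scoped Classical

lemma isOpen_eval (q : QuOpenUnit) (b : Bool) : IsOpen {f : QuOpenUnit → Bool | f q = b} := by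
  have h : {f : QuOpenUnit → Bool | f q = b} = (fun f : QuOpenUnit → Bool => f q) ⁻¹' {b} := rfl
  rw [h]
  exact (continuous_apply q).isOpen_preimage _ (isOpen_discrete _)

/-- Indicator-function embedding of down-sets into Cantor space. -/
noncomputable def phiDS (I : DownSetsQ) (q : QuOpenUnit) : Bool := decide (q ∈ I.1)

lemma phiDS_eq_true {I : DownSetsQ} {q : QuOpenUnit} : phiDS I q = true ↔ q ∈ I.1 := by
  simp [phiDS]

lemma phiDS_injective : Function.Injective phiDS := by
  intro I J h
  apply Subtype.ext
  ext q
  rw [← phiDS_eq_true, ← phiDS_eq_true, h]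

/-- The principal strict down-set below `q`. -/
def ltDS (q : QuOpenUnit) : DownSetsQ :=
  ⟨{x | x < q}, fun a b hba ha => lt_of_le_of_lt hba ha⟩

/-- The principal down-set below `q`. -/
def leDS (q : QuOpenUnit) : DownSetsQ :=
  ⟨{x | x ≤ q}, fun a b hba ha => le_trans hba ha⟩

lemma mem_iff_not_Iic {I : DownSetsQ} {q : QuOpenUnit} :
    q ∈ I.1 ↔ ¬ I ≤ ltDS q := by
  constructor
  · intro hq hle
    exact absurd (hle hq) (lt_irrefl q)
  · intro h
    by_contra hq
    apply h
    intro x hx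
    rcases lt_or_ge x q with h1 | h1
    · exact h1
    · exact absurd (I.2 h1 hx) hq

lemma mem_iff_Ici {I : DownSetsQ} {q : QuOpenUnit} :
    q ∈ I.1 ↔ leDS q ≤ I := by
  constructor
  · intro hq x hx
    exact I.2 hx hq
  · intro h
    exact h (le_refl q)

lemma intervalTopology_eq_induced :
    intervalTopology DownSetsQ
      = TopologicalSpace.induced phiDS (by infer_instance) := by
  apply le_antisymm
  · -- interval topology is finer: phiDS is continuous w.r.t. the interval topology
    rw [← continuous_iff_le_induced (t₁ := intervalTopology DownSetsQ)]
    letI : TopologicalSpace DownSetsQ := intervalTopology DownSetsQ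
    apply continuous_pi
    intro q
    rw [continuous_discrete_rng]
    intro b
    cases b
    · -- preimage of false = (Ici (leDS q))ᶜ
      have : (fun I => phiDS I q) ⁻¹' {false} = (Set.Ici (leDS q))ᶜ := by
        ext I
        simp only [Set.mem_preimage, Set.mem_singleton_iff, Set.mem_compl_iff, Set.mem_Ici]
        rw [← mem_iff_Ici, ← phiDS_eq_true]
        cases h : phiDS I q <;> simp
      rw [this]
      exact TopologicalSpace.isOpen_generateFrom_of_mem (Or.inr ⟨leDS q, rfl⟩)
    · -- preimage of true = (Iic (ltDS q))ᶜ
      have : (fun I => phiDS I q) ⁻¹' {true} = (Set.Iic (ltDS q))ᶜ := by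
        ext I
        simp only [Set.mem_preimage, Set.mem_singleton_iff, Set.mem_compl_iff, Set.mem_Iic]
        rw [phiDS_eq_true, mem_iff_not_Iic]
      rw [this]
      exact TopologicalSpace.isOpen_generateFrom_of_mem (Or.inl ⟨ltDS q, rfl⟩)
  · -- induced topology is finer: each subbasic set is open in the induced topology
    letI : TopologicalSpace DownSetsQ := TopologicalSpace.induced phiDS (by infer_instance)
    apply le_generateFrom
    rintro S (⟨J, rfl⟩ | ⟨J, rfl⟩)
    · -- (Iic J)ᶜ = ⋃ q ∉ J, {I | q ∈ I}
      have hS : (Set.Iic J)ᶜ = ⋃ (q : QuOpenUnit) (_ : q ∉ J.1),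
          phiDS ⁻¹' {f | f q = true} := by
        ext I
        simp only [Set.mem_compl_iff, Set.mem_Iic, Set.mem_iUnion, Set.mem_preimage,
          Set.mem_setOf_eq, phiDS_eq_true]
        constructor
        · intro h
          rcases Set.not_subset.mp h with ⟨q, hqI, hqJ⟩
          exact ⟨q, hqJ, hqI⟩
        · rintro ⟨q, hqJ, hqI⟩ hle
          exact hqJ (hle hqI)
      rw [hS]
      refine isOpen_iUnion fun q => isOpen_iUnion fun _ => ?_
      exact isOpen_induced (isOpen_eval q true)
    · -- (Ici J)ᶜ = ⋃ q ∈ J, {I | q ∉ I}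
      have hS : (Set.Ici J)ᶜ = ⋃ (q : QuOpenUnit) (_ : q ∈ J.1),
          phiDS ⁻¹' {f | f q = false} := by
        ext I
        simp only [Set.mem_compl_iff, Set.mem_Ici, Set.mem_iUnion, Set.mem_preimage,
          Set.mem_setOf_eq]
        constructor
        · intro h
          rcases Set.not_subset.mp h with ⟨q, hqJ, hqI⟩
          exact ⟨q, hqJ, by simpa [phiDS] using hqI⟩
        · rintro ⟨q, hqJ, hqI⟩ hle
          have : q ∈ I.1 := hle hqJ
          rw [← phiDS_eq_true] at this
          simp [this] at hqI
      rw [hS]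
      refine isOpen_iUnion fun q => isOpen_iUnion fun _ => ?_
      exact isOpen_induced (isOpen_eval q false)

lemma range_phiDS_closed : IsClosed (Set.range phiDS) := by
  have hrange : Set.range phiDS =
      ⋂ (a : QuOpenUnit) (b : QuOpenUnit) (_ : a ≤ b),
        ({f : QuOpenUnit → Bool | f b = true} ∩ {f | f a = false})ᶜ := by
    ext f
    simp only [Set.mem_range, Set.mem_iInter, Set.mem_compl_iff, Set.mem_inter_iff,
      Set.mem_setOf_eq, not_and]
    constructor
    · rintro ⟨I, rfl⟩ a b hab hb ha
      rw [phiDS_eq_true] at hb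
      have : a ∈ I.1 := I.2 hab hb
      rw [← phiDS_eq_true] at this
      simp [this] at ha
    · intro h
      refine ⟨⟨{q | f q = true}, fun b a hab hb => ?_⟩, ?_⟩
      · have := h a b hab hb
        cases hfa : f a
        · exact absurd hfa this
        · exact hfa
      · funext q
        simp only [phiDS, Set.mem_setOf_eq]
        rw [Bool.eq_iff_iff]
        simp
  rw [hrange]
  refine isClosed_iInter fun a => isClosed_iInter fun b => isClosed_iInter fun _ => ?_
  apply IsOpen.isClosed_compl
  exact (isOpen_eval b true).inter (isOpen_eval a false)

/-- `C`, the poset of down-sets of `ℚ ∩ (0,1)` ordered by inclusion, is compact and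
totally disconnected in its interval topology. -/
theorem downSetsQ_intervalTopology_compact_totallyDisconnected :
    @CompactSpace DownSetsQ (intervalTopology DownSetsQ) ∧
      @TotallyDisconnectedSpace DownSetsQ (intervalTopology DownSetsQ) := by
  letI : TopologicalSpace DownSetsQ := intervalTopology DownSetsQ
  have hind : (intervalTopology DownSetsQ)
      = TopologicalSpace.induced phiDS (by infer_instance) := intervalTopology_eq_induced
  have hemb : Topology.IsEmbedding phiDS := ⟨⟨hind⟩, phiDS_injective⟩
  have hce : Topology.IsClosedEmbedding phiDS := ⟨hemb, range_phiDS_closed⟩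
  refine ⟨hce.compactSpace, ?_⟩
  rw [← hemb.isTotallyDisconnected_range]
  exact isTotallyDisconnected_of_totallyDisconnectedSpace _
end

section
/- In the poset P (alternating tree poset), the element p is the greatest lower bound of the chain {p_i : i < ω}, where p < p_i < p_j for j < i. -/
lemma tree_key {y : List ℕ} {i : ℕ} (h : TreeLe y [i]) :
    y = [] ∨ ∃ a t, y = a :: t ∧ i ≤ a ∧ t.length ≤ 1 := by
  induction h using Relation.ReflTransGen.head_induction_on with
  | refl => exact Or.inr ⟨i, [], rfl, le_refl i, by simp⟩
  | head hstep _ ih =>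
    cases hstep with
    | root_lt j => exact Or.inl rfl
    | @root_sib i' j hji =>
      rcases ih with h0 | ⟨a, t, heq, hia, hlen⟩
      · simp at h0
      · obtain ⟨rfl, rfl⟩ : j = a ∧ ([] : List ℕ) = t := by
          simpa using heq
        exact Or.inr ⟨i', [], rfl, le_of_lt (lt_of_le_of_lt hia hji), by simp⟩
    | even_sib t ht m i' j hij =>
      rcases ih with h0 | ⟨a, s, heq, hia, hlen⟩
      · simp at h0
      · cases t with
        | nil =>
          obtain ⟨rfl, rfl⟩ : m = a ∧ [j] = s := by simpa using heq
          exact Or.inr ⟨m, [i'], rfl, hia, by simp⟩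
        | cons b t' =>
          obtain ⟨rfl, rfl⟩ : b = a ∧ t' ++ [m, j] = s := by simpa using heq
          simp at hlen
    | even_up t ht m k j hkm =>
      rcases ih with h0 | ⟨a, s, heq, hia, hlen⟩
      · rcases (List.append_eq_nil_iff.mp h0) with ⟨-, h1⟩; simp at h1
      · cases t with
        | nil =>
          obtain ⟨rfl, rfl⟩ : k = a ∧ ([] : List ℕ) = s := by simpa using heq
          exact Or.inr ⟨m, [j], rfl, le_trans hia hkm, by simp⟩
        | cons b t' =>
          obtain ⟨rfl, rfl⟩ : b = a ∧ t' ++ [k] = s := by simpa using heq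
          simp at hlen
          subst hlen
          simp [Nat.even_add_one, Nat.odd_iff] at ht
    | odd_down t ht m k i' hkm =>
      rcases ih with h0 | ⟨a, s, heq, hia, hlen⟩
      · rcases (List.append_eq_nil_iff.mp h0) with ⟨-, h1⟩; simp at h1
      · cases t with
        | nil => simp at ht
        | cons b t' =>
          obtain ⟨rfl, rfl⟩ : b = a ∧ t' ++ [m, i'] = s := by simpa using heq
          simp at hlen
    | odd_sib t ht m i' j hji =>
      rcases ih with h0 | ⟨a, s, heq, hia, hlen⟩
      · rcases (List.append_eq_nil_iff.mp h0) with ⟨-, h1⟩; simp at h1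
      · cases t with
        | nil => simp at ht
        | cons b t' =>
          obtain ⟨rfl, rfl⟩ : b = a ∧ t' ++ [m, j] = s := by simpa using heq
          simp at hlen

/-- In `P`, the root `p` is the greatest lower bound of the chain `{p_i : i < ω}`
(where `p < p_i < p_j` for `j < i`). -/
theorem tree_root_isGLB :
    (∀ i : ℕ, TreeLe [] [i]) ∧
      ∀ y : List ℕ, (∀ i : ℕ, TreeLe y [i]) → TreeLe y [] := by
  constructor
  · exact fun i => Relation.ReflTransGen.single (TreeStep.root_lt i)
  · intro y hy
    rcases tree_key (hy 0) with rfl | ⟨a, t, rfl, -, -⟩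
    · exact Relation.ReflTransGen.refl
    · rcases tree_key (hy (a + 1)) with h0 | ⟨a', t', heq, hle, -⟩
      · simp at h0
      · obtain ⟨rfl, -⟩ : a = a' ∧ t = t' := by simpa using heq
        omega
end

section
/- In the poset P, for each sequence (i₀,…,iₙ) with n even, the element p_{i₀,…,iₙ} is the least upper bound of {p_{i₀,…,iₙ,i} : i < ω}, and for n odd it is the greatest lower bound of {p_{i₀,…,iₙ,i} : i < ω}. -/
private lemma eq_nil_or_append (l : List ℕ) : l = [] ∨ ∃ L b, l = L ++ [b] := by
  rcases List.eq_nil_or_concat l with h | ⟨L, b, h⟩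
  · exact Or.inl h
  · exact Or.inr ⟨L, b, by simpa using h⟩

private lemma concatInj {l₁ l₂ : List ℕ} {a b : ℕ} (h : l₁ ++ [a] = l₂ ++ [b]) :
    l₁ = l₂ ∧ a = b := by
  have h2 := List.append_inj' h rfl
  exact ⟨h2.1, by simpa using h2.2⟩

private lemma two_concat (t : List ℕ) (m i : ℕ) : t ++ [m, i] = (t ++ [m]) ++ [i] := by simp

/-- Explicit description of the upper cone of `z`. -/
private def TRel (z y : List ℕ) : Prop :=
  (z = [] ∧ (y = [] ∨ ∃ i, y = [i])) ∨
  (∃ v k, Even v.length ∧ z = v ++ [k] ∧ ∃ k', k' ≤ k ∧ y = v ++ [k']) ∨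
  (∃ u cc, Odd u.length ∧ z = u ++ [cc] ∧
     ((∃ j, cc ≤ j ∧ y = u ++ [j]) ∨
      (∃ m' j, cc ≤ m' ∧ y = u ++ [m', j]) ∨
      (∃ t m k, u = t ++ [m] ∧ k ≤ m ∧ y = t ++ [k])))

private lemma step_inv {b c : List ℕ} (h : TreeStep b c) :
    (b = [] ∧ ∃ i, c = [i]) ∨
    (∃ v k k', Even v.length ∧ k' < k ∧ b = v ++ [k] ∧ c = v ++ [k']) ∨
    (∃ t m i j, Even t.length ∧ i < j ∧ b = t ++ [m, i] ∧ c = t ++ [m, j]) ∨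
    (∃ t m j k, Even t.length ∧ k ≤ m ∧ b = t ++ [m, j] ∧ c = t ++ [k]) ∨
    (∃ t k m i, Odd t.length ∧ k ≤ m ∧ b = t ++ [k] ∧ c = t ++ [m, i]) := by
  cases h with
  | root_lt i => exact Or.inl ⟨rfl, i, rfl⟩
  | @root_sib i j hji => exact Or.inr (Or.inl ⟨[], i, j, by simp, hji, by simp, by simp⟩)
  | even_sib t ht m i j hij => exact Or.inr (Or.inr (Or.inl ⟨t, m, i, j, ht, hij, rfl, rfl⟩))
  | even_up t ht m k j hkm =>
      exact Or.inr (Or.inr (Or.inr (Or.inl ⟨t, m, j, k, ht, hkm, rfl, rfl⟩)))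
  | odd_down t ht m k i hkm =>
      exact Or.inr (Or.inr (Or.inr (Or.inr ⟨t, k, m, i, ht, hkm, rfl, rfl⟩)))
  | odd_sib t ht m i j hji =>
      exact Or.inr (Or.inl ⟨t ++ [m], i, j, by simpa using ht.add_one, hji,
        two_concat t m i, two_concat t m j⟩)

private lemma rel_refl (z : List ℕ) : TRel z z := by
  rcases eq_nil_or_append z with rfl | ⟨v, k, rfl⟩
  · exact Or.inl ⟨rfl, Or.inl rfl⟩
  · rcases Nat.even_or_odd v.length with hv | hv
    · exact Or.inr (Or.inl ⟨v, k, hv, rfl, k, le_refl k, rfl⟩)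
    · exact Or.inr (Or.inr ⟨v, k, hv, rfl, Or.inl ⟨k, le_refl k, rfl⟩⟩)

private lemma rel_step {z b c : List ℕ} (hR : TRel z b) (hS : TreeStep b c) : TRel z c := by
  rcases hR with ⟨hz, hb⟩ | ⟨v, k, hv, hz, k', hk', hb⟩ | ⟨u, cc, hu, hz, hcase⟩
  · -- z = []
    rcases hb with rfl | ⟨i₀, rfl⟩
    · rcases step_inv hS with ⟨-, i, rfl⟩ | ⟨v, k, k', _, _, hb, -⟩ |
        ⟨t, m, i, j, _, _, hb, -⟩ | ⟨t, m, j, k, _, _, hb, -⟩ | ⟨t, k, m, i, _, _, hb, -⟩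
      · exact Or.inl ⟨hz, Or.inr ⟨i, rfl⟩⟩
      all_goals simp at hb
    · rcases step_inv hS with ⟨hb, -⟩ | ⟨v, k, k', hv, hkk, hb, rfl⟩ |
        ⟨t, m, i, j, ht, _, hb, -⟩ | ⟨t, m, j, k, ht, _, hb, -⟩ | ⟨t, k, m, i, ht, _, hb, -⟩
      · simp at hb
      · rcases v with _ | ⟨a, v'⟩
        · exact Or.inl ⟨hz, Or.inr ⟨k', by simp⟩⟩
        · exfalso
          have hlen := congrArg List.length hb
          simp only [List.length_append, List.length_cons, List.length_nil] at hlen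
          omega
      · exfalso; have hlen := congrArg List.length hb
        simp only [List.length_append, List.length_cons, List.length_nil] at hlen; omega
      · exfalso; have hlen := congrArg List.length hb
        simp only [List.length_append, List.length_cons, List.length_nil] at hlen; omega
      · exfalso
        obtain ⟨w, hw⟩ := ht
        have hlen := congrArg List.length hb
        simp only [List.length_append, List.length_cons, List.length_nil] at hlen
        omega
  · -- z = v ++ [k], Even |v|, b = v ++ [k'], k' ≤ k
    subst hb
    rcases step_inv hS with ⟨hb, -⟩ | ⟨v₂, k₂, k₂', hv₂, hkk₂, hb, rfl⟩ |
      ⟨t, m, i, j, ht, _, hb, -⟩ | ⟨t, m, j, k₂, ht, _, hb, -⟩ | ⟨t, k₂, m, i, ht, _, hb, -⟩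
    · simp at hb
    · obtain ⟨rfl, rfl⟩ := concatInj hb
      exact Or.inr (Or.inl ⟨v, k, hv₂, hz, k₂', le_trans (le_of_lt hkk₂) hk', rfl⟩)
    · exfalso
      obtain ⟨w, hw⟩ := hv; obtain ⟨w₂, hw₂⟩ := ht
      have hlen := congrArg List.length hb
      simp only [List.length_append, List.length_cons, List.length_nil] at hlen; omega
    · exfalso
      obtain ⟨w, hw⟩ := hv; obtain ⟨w₂, hw₂⟩ := ht
      have hlen := congrArg List.length hb
      simp only [List.length_append, List.length_cons, List.length_nil] at hlen; omega
    · exfalso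
      obtain ⟨w, hw⟩ := hv; obtain ⟨w₂, hw₂⟩ := ht
      have hlen := congrArg List.length hb
      simp only [List.length_append, List.length_cons, List.length_nil] at hlen; omega
  · -- z = u ++ [cc], Odd |u|
    rcases hcase with ⟨j₁, hj₁, hb⟩ | ⟨m₁, j₁, hm₁, hb⟩ | ⟨t₁, m₁, k₁, hu₁, hk₁, hb⟩
    · -- b = u ++ [j₁]
      subst hb
      rcases step_inv hS with ⟨hb, -⟩ | ⟨v, k, k', hv, hkk, hb, rfl⟩ |
        ⟨t, m, i, j, ht, hij, hb, rfl⟩ | ⟨t, m, j, k, ht, hkm, hb, rfl⟩ |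
        ⟨t, k, m, i, ht, hkm, hb, rfl⟩
      · simp at hb
      · exfalso
        obtain ⟨w, hw⟩ := hu; obtain ⟨w₂, hw₂⟩ := hv
        have hlen := congrArg List.length hb
        simp only [List.length_append, List.length_cons, List.length_nil] at hlen; omega
      · rw [two_concat] at hb
        obtain ⟨h1, rfl⟩ := concatInj hb
        refine Or.inr (Or.inr ⟨u, cc, hu, hz, Or.inl ⟨j, le_trans hj₁ (le_of_lt hij), ?_⟩⟩)
        rw [h1]; exact two_concat t m j
      · rw [two_concat] at hb
        obtain ⟨h1, rfl⟩ := concatInj hb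
        exact Or.inr (Or.inr ⟨u, cc, hu, hz, Or.inr (Or.inr ⟨t, m, k, h1, hkm, rfl⟩)⟩)
      · obtain ⟨rfl, rfl⟩ := concatInj hb
        exact Or.inr (Or.inr ⟨u, cc, hu, hz,
          Or.inr (Or.inl ⟨m, i, le_trans hj₁ hkm, rfl⟩)⟩)
    · -- b = u ++ [m₁, j₁]
      subst hb
      rcases step_inv hS with ⟨hb, -⟩ | ⟨v, k, k', hv, hkk, hb, rfl⟩ |
        ⟨t, m, i, j, ht, hij, hb, rfl⟩ | ⟨t, m, j, k, ht, hkm, hb, rfl⟩ |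
        ⟨t, k, m, i, ht, hkm, hb, rfl⟩
      · simp at hb
      · rw [two_concat] at hb
        obtain ⟨h1, rfl⟩ := concatInj hb
        refine Or.inr (Or.inr ⟨u, cc, hu, hz, Or.inr (Or.inl ⟨m₁, k', hm₁, ?_⟩)⟩)
        rw [← h1]; exact (two_concat u m₁ k').symm
      · exfalso
        obtain ⟨w, hw⟩ := hu; obtain ⟨w₂, hw₂⟩ := ht
        have hlen := congrArg List.length hb
        simp only [List.length_append, List.length_cons, List.length_nil] at hlen; omega
      · exfalso
        obtain ⟨w, hw⟩ := hu; obtain ⟨w₂, hw₂⟩ := ht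
        have hlen := congrArg List.length hb
        simp only [List.length_append, List.length_cons, List.length_nil] at hlen; omega
      · exfalso
        obtain ⟨w, hw⟩ := hu; obtain ⟨w₂, hw₂⟩ := ht
        have hlen := congrArg List.length hb
        simp only [List.length_append, List.length_cons, List.length_nil] at hlen; omega
    · -- b = t₁ ++ [k₁], u = t₁ ++ [m₁], k₁ ≤ m₁
      subst hb
      have ht₁ : Even t₁.length := by
        obtain ⟨w, hw⟩ := hu
        have : u.length = t₁.length + 1 := by rw [hu₁]; simp
        exact ⟨w, by omega⟩
      rcases step_inv hS with ⟨hb, -⟩ | ⟨v, k, k', hv, hkk, hb, rfl⟩ |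
        ⟨t, m, i, j, ht, hij, hb, rfl⟩ | ⟨t, m, j, k, ht, hkm, hb, rfl⟩ |
        ⟨t, k, m, i, ht, hkm, hb, rfl⟩
      · simp at hb
      · obtain ⟨rfl, rfl⟩ := concatInj hb
        exact Or.inr (Or.inr ⟨u, cc, hu, hz,
          Or.inr (Or.inr ⟨t₁, m₁, k', hu₁, le_trans (le_of_lt hkk) hk₁, rfl⟩)⟩)
      · exfalso
        obtain ⟨w, hw⟩ := ht₁; obtain ⟨w₂, hw₂⟩ := ht
        have hlen := congrArg List.length hb
        simp only [List.length_append, List.length_cons, List.length_nil] at hlen; omega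
      · exfalso
        obtain ⟨w, hw⟩ := ht₁; obtain ⟨w₂, hw₂⟩ := ht
        have hlen := congrArg List.length hb
        simp only [List.length_append, List.length_cons, List.length_nil] at hlen; omega
      · exfalso
        obtain ⟨w, hw⟩ := ht₁; obtain ⟨w₂, hw₂⟩ := ht
        have hlen := congrArg List.length hb
        simp only [List.length_append, List.length_cons, List.length_nil] at hlen; omega

private lemma rel_of_le {z y : List ℕ} (h : TreeLe z y) : TRel z y := by
  have h' : Relation.ReflTransGen TreeStep z y := h
  clear h
  induction h' with
  | refl => exact rel_refl z
  | tail _ hstep ih => exact rel_step ih hstep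

private lemma mem_le_foldr {a : ℕ} {l : List ℕ} (h : a ∈ l) : a ≤ l.foldr max 0 := by
  induction l with
  | nil => simp at h
  | cons b l ih =>
    simp only [List.foldr_cons]
    rcases List.mem_cons.mp h with rfl | h'
    · exact le_max_left _ _
    · exact le_trans (ih h') (le_max_right _ _)

private lemma le_sib_down {t : List ℕ} (ht : Even t.length) {m k : ℕ} (hk : k ≤ m) :
    TreeLe (t ++ [m]) (t ++ [k]) := by
  rcases eq_or_lt_of_le hk with rfl | hlt
  · exact Relation.ReflTransGen.refl
  · refine Relation.ReflTransGen.single ?_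
    rcases eq_nil_or_append t with rfl | ⟨t', a, rfl⟩
    · exact TreeStep.root_sib hlt
    · have ht' : Odd t'.length := by
        obtain ⟨w, hw⟩ := ht
        have : (t' ++ [a]).length = t'.length + 1 := by simp
        exact ⟨w - 1, by omega⟩
      have := TreeStep.odd_sib t' ht' a m k hlt
      rw [two_concat, two_concat] at this
      exact this

private lemma le_sib_up {t : List ℕ} (ht : Odd t.length) {c m : ℕ} (hc : c ≤ m) :
    TreeLe (t ++ [c]) (t ++ [m]) := by
  rcases eq_or_lt_of_le hc with rfl | hlt
  · exact Relation.ReflTransGen.refl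
  · rcases eq_nil_or_append t with rfl | ⟨t', a, rfl⟩
    · simp at ht
    · have ht' : Even t'.length := by
        obtain ⟨w, hw⟩ := ht
        have : (t' ++ [a]).length = t'.length + 1 := by simp
        exact ⟨w, by omega⟩
      have := TreeStep.even_sib t' ht' a c m hlt
      rw [two_concat, two_concat] at this
      exact Relation.ReflTransGen.single this

/-- For each `p_{i₀,…,iₙ}` (coded by a nonempty list `s`, `n = s.length - 1`):
if `n` is even (`s.length` odd) it is the least upper bound of its children
`{p_{i₀,…,iₙ,i} : i < ω}`, and if `n` is odd (`s.length` even) it is their greatest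
lower bound. -/
theorem tree_node_isLUB_or_isGLB_of_children (s : List ℕ) (hs : s ≠ []) :
    (Odd s.length →
      (∀ i : ℕ, TreeLe (s ++ [i]) s) ∧
        ∀ y : List ℕ, (∀ i : ℕ, TreeLe (s ++ [i]) y) → TreeLe s y) ∧
    (Even s.length →
      (∀ i : ℕ, TreeLe s (s ++ [i])) ∧
        ∀ y : List ℕ, (∀ i : ℕ, TreeLe y (s ++ [i])) → TreeLe y s) := by
  obtain ⟨t, m, rfl⟩ : ∃ t m, s = t ++ [m] := by
    rcases eq_nil_or_append s with rfl | ⟨t, m, h⟩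
    · exact absurd rfl hs
    · exact ⟨t, m, h⟩
  constructor
  · intro hodd
    have htev : Even t.length := by
      obtain ⟨w, hw⟩ := hodd
      have : (t ++ [m]).length = t.length + 1 := by simp
      exact ⟨w, by omega⟩
    constructor
    · intro i
      refine Relation.ReflTransGen.single ?_
      have := TreeStep.even_up t htev m m i le_rfl
      rw [two_concat] at this
      exact this
    · intro y hy
      set i₀ := y.foldr max 0 + 1 with hi₀
      have h := rel_of_le (hy i₀)
      rcases h with ⟨hz, -⟩ | ⟨v, k, hv, hz, -⟩ | ⟨u, cc, hu, hz, hcase⟩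
      · simp at hz
      · exfalso
        obtain ⟨rfl, rfl⟩ := concatInj hz
        obtain ⟨w, hw⟩ := hv
        obtain ⟨w₂, hw₂⟩ := hodd
        have : (t ++ [m]).length = t.length + 1 := by simp
        omega
      · obtain ⟨h1, rfl⟩ := concatInj hz
        subst h1
        rcases hcase with ⟨j, hj, rfl⟩ | ⟨m', j, hm', rfl⟩ | ⟨t', m'', k, hu2, hkm, rfl⟩
        · exfalso
          have hmem : j ∈ (t ++ [m]) ++ [j] := by simp
          have := mem_le_foldr hmem
          omega
        · exfalso
          have hmem : m' ∈ (t ++ [m]) ++ [m', j] := by simp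
          have := mem_le_foldr hmem
          omega
        · obtain ⟨rfl, rfl⟩ := concatInj hu2
          exact le_sib_down htev hkm
  · intro heven
    have hu : Odd t.length := by
      obtain ⟨w, hw⟩ := heven
      have : (t ++ [m]).length = t.length + 1 := by simp
      exact ⟨w - 1, by omega⟩
    constructor
    · intro i
      refine Relation.ReflTransGen.single ?_
      have := TreeStep.odd_down t hu m m i le_rfl
      rw [two_concat] at this
      exact this
    · intro y hy
      set i₀ := y.foldr max 0 + 1 with hi₀
      have h := rel_of_le (hy i₀)
      rcases h with ⟨rfl, hcase⟩ | ⟨v, k, hv, rfl, k', hk', hz⟩ | ⟨u', cc, hu', rfl, hcase⟩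
      · exfalso
        rcases hcase with hc | ⟨i, hc⟩
        · simp at hc
        · have hlen := congrArg List.length hc
          simp only [List.length_append, List.length_cons, List.length_nil] at hlen
          omega
      · exfalso
        obtain ⟨rfl, rfl⟩ := concatInj hz
        have hmem : k ∈ (t ++ [m]) ++ [k] := by simp
        have := mem_le_foldr hmem
        omega
      · rcases hcase with ⟨j, hj, hz⟩ | ⟨m', j, hm', hz⟩ | ⟨t', m'', k, hu2, hkm, hz⟩
        · exfalso
          obtain ⟨rfl, rfl⟩ := concatInj hz
          obtain ⟨w, hw⟩ := hu'
          obtain ⟨w₂, hw₂⟩ := heven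
          have : (t ++ [m]).length = t.length + 1 := by simp
          omega
        · rw [two_concat] at hz
          obtain ⟨hz1, rfl⟩ := concatInj hz
          obtain ⟨rfl, rfl⟩ := concatInj hz1
          exact le_sib_up hu' hm'
        · exfalso
          obtain ⟨rfl, rfl⟩ := concatInj hz
          have hmem' : m'' ∈ u' ++ [cc] := by rw [hu2]; simp
          have := mem_le_foldr hmem'
          omega
end

section
/- Let (X; τ, ≤) be a Priestley space and suppose x ∈ X is the greatest lower bound of a strictly decreasing sequence (x_i)_{i<ω} (so x_i < x_j for j < i). Then x is an accumulation point of {x_i : i < ω} in τ; in particular x lies in the closure of {x_i : i < ω} ∖ {x}. -/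
/-!
A cluster point `y` of the sequence exists by compactness. The order of a Priestley space is
closed, so `y` lies in the closed set `Iic (xs n)` (which contains a tail of the sequence) for
every `n`, and in `Ici x`; hence `y = x`. As no `xs n` equals `x`, the point `x` is a cluster
point of `{xs n} \ {x}`.
-/

open Filter Set

/-- If `¬ a ≤ b`, a clopen down-set `U` containing `b` but not `a` makes `Uᶜ ×ˢ U` an open
neighbourhood of `(a, b)` disjoint from the order. -/
theorem IsPriestley.orderClosedTopology {X : Type*} [TopologicalSpace X] [Preorder X]
    (h : IsPriestley X) : OrderClosedTopology X where
  isClosed_le' := by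
    refine isOpen_compl_iff.1 (isOpen_iff_forall_mem_open.2 ?_)
    rintro ⟨a, b⟩ hab
    obtain ⟨U, hU, hUl, hbU, haU⟩ := h.2 b a hab
    exact ⟨Uᶜ ×ˢ U, fun p ⟨hp₁, hp₂⟩ hle => hp₁ (hUl hle hp₂),
      hU.isClosed.isOpen_compl.prod hU.isOpen, haU, hbU⟩

section Antitone

variable {ι X : Type*} [Preorder ι] [TopologicalSpace X] [PartialOrder X]
  [ClosedIicTopology X] [ClosedIciTopology X] {xs : ι → X} {x : X}

theorem Antitone.eq_of_mapClusterPt_atTop_of_isGLB (hxs : Antitone xs)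
    (hglb : IsGLB (range xs) x) {y : X} (hy : MapClusterPt y atTop xs) : y = x := by
  have hy_lb : y ∈ lowerBounds (range xs) := by
    rintro _ ⟨n, rfl⟩
    exact isClosed_Iic.mem_of_mapClusterPt hy ((eventually_ge_atTop n).mono fun m hm => hxs hm)
  exact le_antisymm (hglb.2 hy_lb)
    (isClosed_Ici.mem_of_mapClusterPt hy (.of_forall fun n => hglb.1 ⟨n, rfl⟩))

theorem Antitone.mapClusterPt_atTop_of_isGLB [CompactSpace X] [Nonempty ι]
    [IsDirected ι (· ≤ ·)] (hxs : Antitone xs) (hglb : IsGLB (range xs) x) :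
    MapClusterPt x atTop xs := by
  obtain ⟨y, -, hy⟩ := isCompact_univ.exists_mapClusterPt (f := atTop) (u := xs) (by simp)
  rwa [← hxs.eq_of_mapClusterPt_atTop_of_isGLB hglb hy]

end Antitone

/-- In a Priestley space, if `x` is the greatest lower bound of a strictly decreasing
sequence `(x_i)` (so `x_i < x_j` for `j < i`), then `x` is an accumulation point of
`{x_i : i < ω}`; in particular `x` lies in the closure of `{x_i} \ {x}`. -/
theorem priestley_glb_accPt {X : Type*} [TopologicalSpace X] [PartialOrder X]
    (h : IsPriestley X) (x : X) (xs : ℕ → X)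
    (hdec : ∀ i j : ℕ, j < i → xs i < xs j)
    (hglb : IsGLB (Set.range xs) x) :
    AccPt x (Filter.principal (Set.range xs)) ∧
      x ∈ closure (Set.range xs \ {x}) := by
  have := h.1
  have := h.orderClosedTopology
  have hanti : StrictAnti xs := fun i j hij => hdec j i hij
  have hne : ∀ n, xs n ≠ x := fun n =>
    ((hglb.1 ⟨n + 1, rfl⟩).trans_lt (hanti n.lt_succ_self)).ne'
  have hcl : ClusterPt x (𝓟 (range xs \ {x})) :=
    ClusterPt.mono (hanti.antitone.mapClusterPt_atTop_of_isGLB hglb)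
      (tendsto_principal.2 (.of_forall fun n => ⟨⟨n, rfl⟩, hne n⟩))
  exact ⟨accPt_principal_iff_clusterPt.2 hcl, mem_closure_iff_clusterPt.2 hcl⟩
end

section
/- Let (X; τ, ≤) be a Priestley space in which every point is an accumulation point, and let A ⊂ B be clopen down-sets with A ≠ B. Then there exists a clopen down-set C with A ⊂ C ⊂ B (both inclusions strict). -/
/-- In a Priestley space in which every point is an accumulation point, between any two
clopen down-sets `A ⊂ B` there lies a third: a clopen down-set `C` with
`A ⊂ C ⊂ B` (both inclusions strict). -/
theorem priestley_clopen_lowerSet_dense {X : Type*} [TopologicalSpace X] [PartialOrder X]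
    (h : IsPriestley X)
    (hacc : ∀ x : X, x ∈ closure {y : X | y ≠ x})
    (A B : Set X) (hA : IsClopen A) (hA' : IsLowerSet A)
    (hB : IsClopen B) (hB' : IsLowerSet B) (hAB : A ⊂ B) :
    ∃ C : Set X, IsClopen C ∧ IsLowerSet C ∧ A ⊂ C ∧ C ⊂ B := by
  obtain ⟨x, hxB, hxA⟩ := Set.exists_of_ssubset hAB
  have hopen : IsOpen (B \ A) := hB.isOpen.sdiff hA.isClosed
  obtain ⟨y, hy, hyx⟩ := mem_closure_iff.mp (hacc x) (B \ A) hopen ⟨hxB, hxA⟩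
  have hyB : y ∈ B := hy.1
  have hyA : y ∉ A := hy.2
  rcases Classical.em (y ≤ x) with hle | hnle
  · -- then ¬ x ≤ y, separate y from x
    have hxy : ¬ x ≤ y := fun h' => hyx (le_antisymm hle h')
    obtain ⟨U, hU, hU', hyU, hxU⟩ := h.2 y x hxy
    refine ⟨A ∪ (U ∩ B), hA.union (hU.inter hB), hA'.union (hU'.inter hB'), ?_, ?_⟩
    · constructor
      · exact Set.subset_union_left
      · intro hsub
        exact hyA (hsub (Set.mem_union_right _ ⟨hyU, hyB⟩))
    · constructor
      · rintro z (hz | ⟨_, hz⟩)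
        · exact hAB.1 hz
        · exact hz
      · intro hsub
        rcases hsub hxB with h | ⟨h, _⟩
        · exact hxA h
        · exact hxU h
  · obtain ⟨U, hU, hU', hxU, hyU⟩ := h.2 x y hnle
    refine ⟨A ∪ (U ∩ B), hA.union (hU.inter hB), hA'.union (hU'.inter hB'), ?_, ?_⟩
    · constructor
      · exact Set.subset_union_left
      · intro hsub
        exact hxA (hsub (Set.mem_union_right _ ⟨hxU, hxB⟩))
    · constructor
      · rintro z (hz | ⟨_, hz⟩)
        · exact hAB.1 hz
        · exact hz
      · intro hsub
        rcases hsub hyB with h | ⟨h, _⟩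
        · exact hyA h
        · exact hyU h
end

section
/- The alternating tree poset P (on {p} ∪ finite sequences of naturals) is not representable: there is no topology τ on P making (P; τ, ≤) a Priestley space. -/
/-!
The alternating sum `treeRank [i₀, …, iₙ] = Σₖ (-1)ᵏ 2^(-iₖ)` is strictly increasing along every
generating relation, so `TreeLe` is antisymmetric. In `P` the children of an element `w` form a
monotone sequence (decreasing for `w` of even length, increasing for odd length) whose ranks
converge to the rank of `w`, so `w` is the only element lying between `w` and all of its
children. In a compact Priestley space the closedness of principal up- and down-sets then forces
`w` to be a cluster point of its children, so no point of `P` is isolated. But a countable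
compact Hausdorff space has an isolated point by the Baire category theorem.
-/

open Filter Set Topology

namespace Relation.ReflTransGen

variable {α β : Type*} [Preorder β] {r : α → α → Prop} {f : α → β} {a b : α}

theorem map_le (hf : ∀ ⦃x y⦄, r x y → f x < f y) (h : ReflTransGen r a b) : f a ≤ f b := by
  induction h with
  | refl => exact le_rfl
  | tail _ hbc ih => exact ih.trans (hf hbc).le

theorem eq_of_map_le (hf : ∀ ⦃x y⦄, r x y → f x < f y) (h : ReflTransGen r a b)
    (hba : f b ≤ f a) : a = b := by
  rcases h.cases_head with rfl | ⟨c, hac, hcb⟩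
  · rfl
  · exact (lt_irrefl _ ((hf hac).trans_le ((hcb.map_le hf).trans hba))).elim

end Relation.ReflTransGen

section Priestley

variable {α : Type*} [TopologicalSpace α] [Preorder α] [PriestleySpace α]

instance PriestleySpace.toClosedIciTopology : ClosedIciTopology α where
  isClosed_Ici a := isOpen_compl_iff.1 <| isOpen_iff_forall_mem_open.2 fun _ hb => by
    obtain ⟨U, hU, hUup, haU, hbU⟩ := exists_isClopen_upper_of_not_le hb
    exact ⟨Uᶜ, fun _ hcU hac => hcU (hUup hac haU), hU.compl.isOpen, hbU⟩

instance PriestleySpace.toClosedIicTopology : ClosedIicTopology α where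
  isClosed_Iic a := isOpen_compl_iff.1 <| isOpen_iff_forall_mem_open.2 fun _ hb => by
    obtain ⟨U, hU, hUup, hbU, haU⟩ := exists_isClopen_upper_of_not_le hb
    exact ⟨U, fun _ hcU hca => haU (hUup hca hcU), hU.isOpen, hbU⟩

end Priestley

section Compact

variable {α : Type*} [TopologicalSpace α] [Preorder α] [CompactSpace α] [ClosedIciTopology α]
  [ClosedIicTopology α] {x : ℕ → α} {w : α}

theorem Antitone.mapClusterPt_atTop (hx : Antitone x)
    (hw : Ici w ∩ lowerBounds (range x) = {w}) : MapClusterPt w atTop x := by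
  obtain ⟨z, hz⟩ := exists_clusterPt_of_compactSpace (map x atTop)
  have hwx : ∀ i, w ≤ x i := fun i => (hw.symm ▸ mem_singleton w).2 ⟨i, rfl⟩
  have hzw : z ∈ Ici w ∩ lowerBounds (range x) := by
    refine ⟨isClosed_Ici.mem_of_mapClusterPt hz (.of_forall hwx), ?_⟩
    rintro _ ⟨i, rfl⟩
    exact isClosed_Iic.mem_of_mapClusterPt hz (eventually_atTop.2 ⟨i, fun _ hj => hx hj⟩)
  rw [hw, mem_singleton_iff] at hzw
  rwa [hzw] at hz

theorem Monotone.mapClusterPt_atTop (hx : Monotone x)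
    (hw : Iic w ∩ upperBounds (range x) = {w}) : MapClusterPt w atTop x :=
  haveI : CompactSpace αᵒᵈ := ‹CompactSpace α›
  Antitone.mapClusterPt_atTop (α := αᵒᵈ) hx.dual_right hw

end Compact

theorem exists_isOpen_singleton_of_countable {X : Type*} [TopologicalSpace X] [T1Space X]
    [BaireSpace X] [Countable X] [Nonempty X] : ∃ x : X, IsOpen ({x} : Set X) := by
  obtain ⟨x, y, hy⟩ := nonempty_interior_of_iUnion_of_closed (f := fun x : X => {x})
    (fun _ => isClosed_singleton) (iUnion_of_singleton X)
  refine ⟨x, ?_⟩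
  rw [← interior_subset.antisymm (singleton_subset_iff.2 (interior_subset hy ▸ hy))]
  exact isOpen_interior

noncomputable def treeRank : List ℕ → ℝ
  | [] => 0
  | a :: l => 2⁻¹ ^ a - treeRank l

theorem treeRank_append_singleton (w : List ℕ) (i : ℕ) :
    treeRank (w ++ [i]) = treeRank w + (-1) ^ w.length * 2⁻¹ ^ i := by
  induction w with
  | nil => simp [treeRank]
  | cons a w ih => simp only [List.cons_append, treeRank, ih, List.length_cons, pow_succ]; ring

theorem treeRank_append_pair (t : List ℕ) (m i : ℕ) :
    treeRank (t ++ [m, i]) = treeRank t + (-1) ^ t.length * (2⁻¹ ^ m - 2⁻¹ ^ i) := by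
  rw [show t ++ [m, i] = t ++ [m] ++ [i] by simp, treeRank_append_singleton,
    treeRank_append_singleton, List.length_append, List.length_singleton, pow_succ]
  ring

theorem treeRank_lt_of_treeStep ⦃a b : List ℕ⦄ (h : TreeStep a b) : treeRank a < treeRank b := by
  have hanti : ∀ {i j : ℕ}, i < j → (2⁻¹ : ℝ) ^ j < 2⁻¹ ^ i := fun hij =>
    pow_lt_pow_right_of_lt_one₀ (by norm_num) (by norm_num) hij
  have hanti' : ∀ {i j : ℕ}, i ≤ j → (2⁻¹ : ℝ) ^ j ≤ 2⁻¹ ^ i := fun hij =>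
    pow_le_pow_of_le_one (by norm_num) (by norm_num) hij
  have hpos : ∀ i : ℕ, (0 : ℝ) < 2⁻¹ ^ i := fun _ => by positivity
  cases h with
  | root_lt i => simp [treeRank]
  | root_sib hji => simpa [treeRank] using hanti hji
  | even_sib t ht m i j hij =>
    rw [treeRank_append_pair, treeRank_append_pair, ht.neg_one_pow]; linarith [hanti hij]
  | even_up t ht m k j hkm =>
    rw [treeRank_append_pair, treeRank_append_singleton, ht.neg_one_pow]
    linarith [hanti' hkm, hpos j]
  | odd_down t ht m k i hkm =>
    rw [treeRank_append_pair, treeRank_append_singleton, ht.neg_one_pow]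
    linarith [hanti' hkm, hpos i]
  | odd_sib t ht m i j hji =>
    rw [treeRank_append_pair, treeRank_append_pair, ht.neg_one_pow]; linarith [hanti hji]

theorem tendsto_treeRank_append_singleton (w : List ℕ) :
    Tendsto (fun i => treeRank (w ++ [i])) atTop (𝓝 (treeRank w)) := by
  simp only [treeRank_append_singleton]
  simpa using tendsto_const_nhds.add (tendsto_const_nhds.mul
    (tendsto_pow_atTop_nhds_zero_of_lt_one (r := (2⁻¹ : ℝ)) (by norm_num) (by norm_num)))

section Children

variable {w : List ℕ}

theorem treeStep_append_singleton_of_even (hw : Even w.length) (i : ℕ) :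
    TreeStep w (w ++ [i]) := by
  rcases w.eq_nil_or_concat' with rfl | ⟨t, m, rfl⟩
  · exact .root_lt i
  · simpa using TreeStep.odd_down t (by simpa [Nat.even_add_one] using hw) m m i le_rfl

theorem treeStep_append_succ_of_even (hw : Even w.length) (i : ℕ) :
    TreeStep (w ++ [i + 1]) (w ++ [i]) := by
  rcases w.eq_nil_or_concat' with rfl | ⟨t, m, rfl⟩
  · exact .root_sib i.lt_succ_self
  · simpa using TreeStep.odd_sib t (by simpa [Nat.even_add_one] using hw) m (i + 1) i
      i.lt_succ_self

theorem treeStep_append_singleton_of_odd (hw : Odd w.length) (i : ℕ) :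
    TreeStep (w ++ [i]) w := by
  rcases w.eq_nil_or_concat' with rfl | ⟨t, m, rfl⟩
  · simp at hw
  · simpa using TreeStep.even_up t (by simpa [Nat.odd_add_one] using hw) m m i le_rfl

theorem treeStep_append_succ_of_odd (hw : Odd w.length) (i : ℕ) :
    TreeStep (w ++ [i]) (w ++ [i + 1]) := by
  rcases w.eq_nil_or_concat' with rfl | ⟨t, m, rfl⟩
  · simp at hw
  · simpa using TreeStep.even_sib t (by simpa [Nat.odd_add_one] using hw) m i (i + 1)
      i.lt_succ_self

end Children

def AltTree : Type := List ℕ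

namespace AltTree

instance : PartialOrder AltTree where
  le := TreeLe
  le_refl _ := .refl
  le_trans _ _ _ := .trans
  le_antisymm _ _ hab hba :=
    Relation.ReflTransGen.eq_of_map_le treeRank_lt_of_treeStep hab
      (Relation.ReflTransGen.map_le treeRank_lt_of_treeStep hba)

instance : Countable AltTree := inferInstanceAs (Countable (List ℕ))

instance : Nonempty AltTree := ⟨([] : List ℕ)⟩

def children (w : AltTree) (i : ℕ) : AltTree := List.append w [i]

variable {w : AltTree}

theorem children_ne (w : AltTree) (i : ℕ) : children w i ≠ w := fun h =>
  List.cons_ne_nil i [] (List.append_right_eq_self.1 h)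

theorem antitone_children (hw : Even (List.length w)) : Antitone (children w) :=
  antitone_nat_of_succ_le fun i => .single (treeStep_append_succ_of_even hw i)

theorem monotone_children (hw : Odd (List.length w)) : Monotone (children w) :=
  monotone_nat_of_le_succ fun i => .single (treeStep_append_succ_of_odd hw i)

theorem treeRank_le_of_le {a b : AltTree} (h : a ≤ b) : treeRank a ≤ treeRank b :=
  Relation.ReflTransGen.map_le treeRank_lt_of_treeStep h

theorem eq_of_le_of_treeRank_le {a b : AltTree} (h : a ≤ b) (hba : treeRank b ≤ treeRank a) :
    a = b :=
  Relation.ReflTransGen.eq_of_map_le treeRank_lt_of_treeStep h hba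

theorem tendsto_treeRank_children (w : AltTree) :
    Tendsto (fun i => treeRank (children w i)) atTop (𝓝 (treeRank w)) :=
  tendsto_treeRank_append_singleton w

theorem Ici_inter_lowerBounds_children (hw : Even (List.length w)) :
    Ici w ∩ lowerBounds (range (children w)) = {w} := by
  ext z
  constructor
  · rintro ⟨hwz, hz⟩
    have hrank : treeRank z ≤ treeRank w := ge_of_tendsto' (tendsto_treeRank_children w)
      fun i => treeRank_le_of_le (hz ⟨i, rfl⟩)
    exact (eq_of_le_of_treeRank_le hwz hrank).symm
  · rintro rfl
    exact ⟨mem_Ici.2 le_rfl, forall_mem_range.2 fun i =>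
      .single (treeStep_append_singleton_of_even hw i)⟩

theorem Iic_inter_upperBounds_children (hw : Odd (List.length w)) :
    Iic w ∩ upperBounds (range (children w)) = {w} := by
  ext z
  constructor
  · rintro ⟨hzw, hz⟩
    have hrank : treeRank w ≤ treeRank z := le_of_tendsto' (tendsto_treeRank_children w)
      fun i => treeRank_le_of_le (hz ⟨i, rfl⟩)
    exact eq_of_le_of_treeRank_le hzw hrank
  · rintro rfl
    exact ⟨mem_Iic.2 le_rfl, forall_mem_range.2 fun i =>
      .single (treeStep_append_singleton_of_odd hw i)⟩

variable [TopologicalSpace AltTree] [CompactSpace AltTree] [PriestleySpace AltTree]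

theorem mapClusterPt_children (w : AltTree) : MapClusterPt w atTop (children w) := by
  rcases Nat.even_or_odd (List.length w) with hw | hw
  · exact (antitone_children hw).mapClusterPt_atTop (Ici_inter_lowerBounds_children hw)
  · exact (monotone_children hw).mapClusterPt_atTop (Iic_inter_upperBounds_children hw)

theorem not_isOpen_singleton (w : AltTree) : ¬IsOpen ({w} : Set AltTree) := fun hw => by
  obtain ⟨i, hi⟩ := (mapClusterPt_iff_frequently.1 (mapClusterPt_children w) _
    (hw.mem_nhds rfl)).exists
  exact children_ne w i hi

end AltTree

/-- The alternating tree poset `P` is not representable: there is no compact topology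
on `P` which is totally order-disconnected with respect to its order (i.e. making it a
Priestley space). -/
theorem tree_not_representable :
    ¬ ∃ τ : TopologicalSpace (List ℕ),
        @CompactSpace (List ℕ) τ ∧
          ∀ a b : List ℕ, ¬ TreeLe b a →
            ∃ U : Set (List ℕ), @IsClopen _ τ U ∧
              (∀ u ∈ U, ∀ v, TreeLe v u → v ∈ U) ∧ a ∈ U ∧ b ∉ U := by
  rintro ⟨τ, hcompact, hsep⟩
  let _ : TopologicalSpace AltTree := τ
  have : CompactSpace AltTree := hcompact
  have : PriestleySpace AltTree := ⟨fun {x y} hxy => by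
    obtain ⟨U, hU, hlower, hyU, hxU⟩ := hsep y x hxy
    exact ⟨Uᶜ, hU.compl, IsLowerSet.compl fun _ _ hba ha => hlower _ ha _ hba, hxU,
      not_not.2 hyU⟩⟩
  obtain ⟨w, hw⟩ := exists_isOpen_singleton_of_countable (X := AltTree)
  exact AltTree.not_isOpen_singleton w hw
end

section
/- Any countable bounded distributive lattice L that contains the rational unit interval [0,1] ∩ ℚ as a (0,1)-sublattice has an uncountable set of prime ideals; hence its Priestley dual space is uncountable. -/
/-- Any countable bounded distributive lattice `L` containing the rational unit
interval `[0,1] ∩ ℚ` as a `(0,1)`-sublattice has uncountably many prime ideals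
(hence its Priestley dual space is uncountable). The embedding is given by a map
`f : ℚ → L` which, on `[0,1] ∩ ℚ`, is injective, preserves joins and meets (which
on `ℚ` are `max` and `min`), and sends `0` to `⊥` and `1` to `⊤`. -/
theorem uncountable_primeIdeals_of_rat_unit_interval_sublattice
    {L : Type*} [DistribLattice L] [BoundedOrder L] [Countable L]
    (f : ℚ → L)
    (hinj : ∀ a ∈ Set.Icc (0 : ℚ) 1, ∀ b ∈ Set.Icc (0 : ℚ) 1, f a = f b → a = b)
    (hsup : ∀ a ∈ Set.Icc (0 : ℚ) 1, ∀ b ∈ Set.Icc (0 : ℚ) 1, f (max a b) = f a ⊔ f b)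
    (hinf : ∀ a ∈ Set.Icc (0 : ℚ) 1, ∀ b ∈ Set.Icc (0 : ℚ) 1, f (min a b) = f a ⊓ f b)
    (h0 : f 0 = ⊥) (h1 : f 1 = ⊤) :
    Uncountable {I : Order.Ideal L // Order.Ideal.IsPrime I} := by
  classical
  -- monotonicity of f on [0,1]
  have hmono : ∀ a ∈ Set.Icc (0 : ℚ) 1, ∀ b ∈ Set.Icc (0 : ℚ) 1, a ≤ b → f a ≤ f b := by
    intro a ha b hb hab
    have h := hinf a ha b hb
    rw [min_eq_left hab] at h
    rw [h]; exact inf_le_right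
  -- For each real r ∈ (0,1), a prime ideal containing f q for q < r and avoiding f q for q > r
  have key : ∀ r ∈ Set.Ioo (0 : ℝ) 1, ∃ J : Order.Ideal L, J.IsPrime ∧
      (∀ q : ℚ, q ∈ Set.Icc (0 : ℚ) 1 → (q : ℝ) < r → f q ∈ J) ∧
      (∀ q : ℚ, q ∈ Set.Icc (0 : ℚ) 1 → r < (q : ℝ) → f q ∉ J) := by
    intro r hr
    -- the ideal generated by {f q : q < r}
    set Ic : Set L := {x | ∃ q : ℚ, q ∈ Set.Icc (0 : ℚ) 1 ∧ (q : ℝ) < r ∧ x ≤ f q} with hIc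
    have h0Icc : (0 : ℚ) ∈ Set.Icc (0 : ℚ) 1 := by constructor <;> norm_num
    have h1Icc : (1 : ℚ) ∈ Set.Icc (0 : ℚ) 1 := by constructor <;> norm_num
    have IcIdeal : Order.IsIdeal Ic := by
      refine ⟨?_, ⟨f 0, 0, h0Icc, by exact_mod_cast hr.1, le_rfl⟩, ?_⟩
      · intro x y hxy ⟨q, hq, hqr, hyq⟩
        exact ⟨q, hq, hqr, hxy.trans hyq⟩
      · rintro x ⟨q, hq, hqr, hxq⟩ y ⟨p, hp, hpr, hyp⟩
        refine ⟨f (max q p), ⟨max q p, ?_, ?_, le_rfl⟩, ?_, ?_⟩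
        · exact ⟨le_max_of_le_left hq.1, max_le hq.2 hp.2⟩
        · rcases max_cases q p with ⟨h, _⟩ | ⟨h, _⟩ <;> rw [h] <;> assumption
        · rw [hsup q hq p hp]; exact hxq.trans le_sup_left
        · rw [hsup q hq p hp]; exact hyp.trans le_sup_right
    -- the filter generated by {f q : r < q}
    set Fc : Set L := {x | ∃ q : ℚ, q ∈ Set.Icc (0 : ℚ) 1 ∧ r < (q : ℝ) ∧ f q ≤ x} with hFc
    have FcFilter : Order.IsPFilter Fc := by
      refine Order.IsPFilter.of_def ⟨f 1, 1, h1Icc, by exact_mod_cast hr.2, le_rfl⟩ ?_ ?_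
      · rintro x ⟨q, hq, hqr, hqx⟩ y ⟨p, hp, hpr, hpy⟩
        refine ⟨f (min q p), ⟨min q p, ?_, ?_, le_rfl⟩, ?_, ?_⟩
        · exact ⟨le_min hq.1 hp.1, min_le_of_left_le hq.2⟩
        · rcases min_cases q p with ⟨h, _⟩ | ⟨h, _⟩ <;> rw [h] <;> assumption
        · rw [hinf q hq p hp]; exact inf_le_left.trans hqx
        · rw [hinf q hq p hp]; exact inf_le_right.trans hpy
      · intro x y hxy ⟨q, hq, hqr, hqx⟩
        exact ⟨q, hq, hqr, hqx.trans hxy⟩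
    -- disjointness
    have hdisj : Disjoint (FcFilter.toPFilter : Set L) (IcIdeal.toIdeal : Set L) := by
      rw [Set.disjoint_left]
      rintro x ⟨q, hq, hqr, hqx⟩ ⟨p, hp, hpr, hxp⟩
      have hpq : p < q := by
        have : (p : ℝ) < (q : ℝ) := hpr.trans hqr
        exact_mod_cast this
      have h1 : f q ≤ f p := hqx.trans hxp
      have h2 : f p ≤ f q := hmono p hp q hq hpq.le
      exact absurd (hinj p hp q hq (le_antisymm h2 h1)) hpq.ne
    obtain ⟨J, hJprime, hJle, hJdisj⟩ :=
      DistribLattice.prime_ideal_of_disjoint_filter_ideal hdisj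
    refine ⟨J, hJprime, ?_, ?_⟩
    · intro q hq hqr
      exact hJle ⟨q, hq, hqr, le_rfl⟩
    · intro q hq hqr hmem
      exact Set.disjoint_left.mp hJdisj ⟨q, hq, hqr, le_rfl⟩ hmem
  -- choose a prime ideal for each r
  choose J hJprime hJin hJout using key
  let g : Set.Ioo (0 : ℝ) 1 → {I : Order.Ideal L // Order.Ideal.IsPrime I} :=
    fun r => ⟨J r r.2, hJprime r r.2⟩
  have hginj : Function.Injective g := by
    intro r s hrs
    by_contra hne
    have hne' : (r : ℝ) ≠ (s : ℝ) := fun h => hne (Subtype.ext h)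
    -- wlog r < s
    wlog hlt : (r : ℝ) < (s : ℝ) generalizing r s
    · exact this hrs.symm (Ne.symm hne) (Ne.symm hne') (hne'.lt_or_gt.resolve_left hlt)
    obtain ⟨q, hq1, hq2⟩ := exists_rat_btwn hlt
    have hqIcc : q ∈ Set.Icc (0 : ℚ) 1 := by
      constructor
      · exact_mod_cast (r.2.1.trans hq1).le
      · exact_mod_cast (hq2.trans s.2.2).le
    have hin : f q ∈ J s s.2 := hJin s s.2 q hqIcc hq2
    have hout : f q ∉ J r r.2 := hJout r r.2 q hqIcc hq1
    have : J r r.2 = J s s.2 := congrArg Subtype.val hrs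
    rw [this] at hout
    exact hout hin
  have huncount : Uncountable (Set.Ioo (0 : ℝ) 1) := by
    rw [← Cardinal.aleph0_lt_mk_iff, Cardinal.mk_Ioo_real zero_lt_one]
    exact Cardinal.aleph0_lt_continuum
  exact hginj.uncountable
end

section
/- Let (X; τ, ≤) be a Priestley space and S = {x_i : i < ω} a strictly decreasing sequence with greatest lower bound x, x ∉ S. Then S is not closed in τ. -/
/-- In a Priestley space, a strictly decreasing sequence `S = {x_i : i < ω}` whose
greatest lower bound `x` does not belong to `S` is not closed. -/
theorem priestley_strictly_decreasing_not_closed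
    {X : Type*} [TopologicalSpace X] [PartialOrder X]
    (h : IsPriestley X) (x : X) (xs : ℕ → X)
    (hdec : ∀ i j : ℕ, j < i → xs i < xs j)
    (hglb : IsGLB (Set.range xs) x)
    (hx : x ∉ Set.range xs) :
    ¬ IsClosed (Set.range xs) := by
  intro hS
  have hcs : CompactSpace X := h.1
  have hcomp : IsCompact (Set.range xs) := hS.isCompact
  -- choose clopen lower sets
  have hsep : ∀ i : ℕ, ∃ U : Set X, IsClopen U ∧ IsLowerSet U ∧ xs (i+1) ∈ U ∧ xs i ∉ U := by
    intro i
    exact h.2 (xs (i+1)) (xs i) (not_le_of_gt (hdec (i+1) i (Nat.lt_succ_self i)))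
  choose U hUclopen hUlower hUmem hUnot using hsep
  have hcover : Set.range xs ⊆ ⋃ i : ℕ, (U i)ᶜ := by
    rintro _ ⟨j, rfl⟩
    exact Set.mem_iUnion.2 ⟨j, hUnot j⟩
  obtain ⟨t, ht⟩ := hcomp.elim_finite_subcover (fun i => (U i)ᶜ)
    (fun i => (hUclopen i).1.isOpen_compl) hcover
  set m := t.sup id with hm
  have : xs (m+1) ∈ ⋃ i ∈ t, (U i)ᶜ := ht ⟨m+1, rfl⟩
  obtain ⟨i, hit, hmem⟩ := Set.mem_iUnion₂.1 this
  have him : i ≤ m := Finset.le_sup (f := id) hit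
  have hle : xs (m+1) ≤ xs (i+1) := by
    rcases eq_or_lt_of_le him with rfl | hlt
    · exact le_rfl
    · exact le_of_lt (hdec (m+1) (i+1) (Nat.succ_lt_succ hlt))
  exact hmem (hUlower i hle (hUmem i))
end
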